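/- arXiv:1803.00203 — 10 statements merged into one kernel-verified Lean document; each statement's English description precedes it below -/
import Mathlib

section
/- Let (X,d) be a metric space with base point x₀, and let E₁, …, Eₙ be closed subsets with ⋂ᵢ Eᵢ = ∅ whose system diverges as a power function. Define fᵢ(x) = d(x, Eᵢ), F = Σᵢ fᵢ, and gᵢ = fᵢ/F. Then for every α > 0 and r₁ > 0 with F(x) ≥ |x|^(2α) for |x| > r₁, for every asymptotically subpower function s and every ε > 0, there exists r₀ > 0 such that for all x with |x| > r₀ and all y with d(x,y) ≤ s(|x|), one has |gᵢ(x) − gᵢ(y)| < ε. -/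
open Metric

/-- A function is asymptotically subpower if for every `α > 0`,
`s t < t ^ α` for all sufficiently large `t`. -/
def AsymptoticallySubpower (s : ℝ → ℝ) : Prop :=
  ∀ α > (0:ℝ), ∃ t₀ > (0:ℝ), ∀ t > t₀, s t < t ^ α

/-- Lemma 2.2: if the closed sets `E i` have empty intersection and the system
diverges as a power function, then each `gᵢ = fᵢ / F` is Higson subpower. -/
theorem stmt4 {X : Type*} [MetricSpace X] [ProperSpace X]
    (hnc : ¬ CompactSpace X) (x₀ : X) (n : ℕ)
    (E : Fin n → Set X) (hE : ∀ i, IsClosed (E i))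
    (hempty : (⋂ i, E i) = ∅)
    (hdiv : ∃ α > (0:ℝ), ∃ r₀ > (0:ℝ), ∀ x : X, dist x₀ x > r₀ →
      ∃ i, Metric.infDist x (E i) ≥ (dist x₀ x) ^ α)
    (f : Fin n → X → ℝ) (hf : ∀ i x, f i x = Metric.infDist x (E i))
    (F : X → ℝ) (hF : ∀ x, F x = ∑ i, f i x)
    (g : Fin n → X → ℝ) (hg : ∀ i x, g i x = f i x / F x) :
    ∀ α > (0:ℝ), ∀ r₁ > (0:ℝ),
      (∀ x : X, dist x₀ x > r₁ → F x ≥ (dist x₀ x) ^ (2 * α)) →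
      ∀ s : ℝ → ℝ, AsymptoticallySubpower s →
      ∀ ε > (0:ℝ), ∃ r₀ > (0:ℝ), ∀ x y : X, dist x₀ x > r₀ →
        dist x y ≤ s (dist x₀ x) → ∀ i, |g i x - g i y| < ε := by
  intro α hα r₁ hr₁ hFlow s hsub ε hε
  -- f is pointwise nonneg and 1-Lipschitz, F is n-Lipschitz
  have hfnn : ∀ i x, 0 ≤ f i x := fun i x => (hf i x) ▸ Metric.infDist_nonneg
  have hflip : ∀ (i : Fin n) (a b : X), f i a ≤ f i b + dist a b := by
    intro i a b
    rw [hf i a, hf i b]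
    exact Metric.infDist_le_infDist_add_dist
  have hFlip : ∀ a b : X, F a ≤ F b + n * dist a b := by
    intro a b
    rw [hF a, hF b]
    calc ∑ i, f i a ≤ ∑ i : Fin n, (f i b + dist a b) :=
          Finset.sum_le_sum (fun i _ => hflip i a b)
      _ = (∑ i, f i b) + n * dist a b := by
          rw [Finset.sum_add_distrib, Finset.sum_const, Finset.card_univ,
            Fintype.card_fin, nsmul_eq_mul]
  have hfleF : ∀ (i : Fin n) (x : X), f i x ≤ F x := by
    intro i x
    rw [hF x]
    exact Finset.single_le_sum (fun j _ => hfnn j x) (Finset.mem_univ i)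
  obtain ⟨t₀, ht₀, hs⟩ := hsub α hα
  set C : ℝ := max (2 * (n : ℝ)) (2 * ((n : ℝ) + 1) / ε) with hC
  set M : ℝ := max C 1 with hM
  have hM1 : (1:ℝ) ≤ M := le_max_right _ _
  have hM0 : (0:ℝ) < M := lt_of_lt_of_le one_pos hM1
  refine ⟨max (max r₁ t₀) (M ^ (1/α)), ?_, ?_⟩
  · exact lt_of_lt_of_le (Real.rpow_pos_of_pos hM0 _) (le_max_right _ _)
  intro x y hx hd i
  set t := dist x₀ x with ht
  have htr₁ : t > r₁ := lt_of_le_of_lt (le_trans (le_max_left _ _) (le_max_left _ _)) hx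
  have htt₀ : t > t₀ := lt_of_le_of_lt (le_trans (le_max_right _ _) (le_max_left _ _)) hx
  have htM : t > M ^ (1/α) := lt_of_le_of_lt (le_max_right _ _) hx
  have ht0 : 0 < t := lt_trans (Real.rpow_pos_of_pos hM0 _) htM
  have htαM : t ^ α > M := by
    have := Real.rpow_lt_rpow (Real.rpow_nonneg hM0.le _) htM hα
    rwa [one_div, Real.rpow_inv_rpow hM0.le (ne_of_gt hα)] at this
  have htα0 : (0:ℝ) < t ^ α := Real.rpow_pos_of_pos ht0 _
  have htα2n : t ^ α ≥ 2 * n := le_of_lt (lt_of_le_of_lt (le_trans (le_max_left _ _) (le_max_left _ _)) htαM)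
  have htαε : t ^ α > 2 * ((n : ℝ) + 1) / ε := lt_of_le_of_lt (le_trans (le_max_right _ _) (le_max_left _ _)) htαM
  -- distance bound
  have hdle : dist x y < t ^ α := lt_of_le_of_lt hd (hs t htt₀)
  have hdnn : 0 ≤ dist x y := dist_nonneg
  -- lower bound on F x and F y
  have hFx : F x ≥ t ^ α * t ^ α := by
    have h2 : t ^ (2 * α) = t ^ α * t ^ α := by
      rw [two_mul, Real.rpow_add ht0]
    have := hFlow x htr₁
    rw [← ht, h2] at this
    exact this
  have hFy : F y ≥ t ^ α * t ^ α / 2 := by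
    have h1 : F x ≤ F y + n * dist x y := hFlip x y
    have h2 : (n : ℝ) * dist x y ≤ (t ^ α / 2) * (t ^ α) := by
      apply mul_le_mul _ hdle.le hdnn (by positivity)
      linarith
    nlinarith
  have hFy0 : 0 < F y := by nlinarith
  have hFx0 : 0 < F x := by nlinarith
  -- main estimate
  have hab : |f i x - f i y| ≤ dist x y := by
    rw [abs_sub_le_iff]
    constructor
    · linarith [hflip i x y]
    · rw [dist_comm]; linarith [hflip i y x]
  have hPQ : |F x - F y| ≤ n * dist x y := by
    rw [abs_sub_le_iff]
    constructor
    · linarith [hFlip x y]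
    · rw [dist_comm x y]; linarith [hFlip y x]
  have key : |g i x - g i y| ≤ ((n:ℝ) + 1) * dist x y / F y := by
    rw [hg i x, hg i y]
    have heq : f i x / F x - f i y / F y =
        f i x * (F y - F x) / (F x * F y) + (f i x - f i y) / F y := by
      field_simp
      ring
    rw [heq]
    have h1 : |f i x * (F y - F x) / (F x * F y)| ≤ (n : ℝ) * dist x y / F y := by
      rw [abs_div, abs_mul, abs_of_pos (mul_pos hFx0 hFy0)]
      rw [div_le_div_iff₀ (mul_pos hFx0 hFy0) hFy0]
      have e1 : |f i x| ≤ F x := by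
        rw [abs_of_nonneg (hfnn i x)]; exact hfleF i x
      have e2 : |F y - F x| ≤ n * dist x y := by
        rw [abs_sub_comm]; exact hPQ
      calc |f i x| * |F y - F x| * F y ≤ F x * ((n : ℝ) * dist x y) * F y := by
            apply mul_le_mul_of_nonneg_right _ hFy0.le
            exact mul_le_mul e1 e2 (abs_nonneg _) hFx0.le
        _ = (n : ℝ) * dist x y * (F x * F y) := by ring
    have h2 : |(f i x - f i y) / F y| ≤ dist x y / F y := by
      rw [abs_div, abs_of_pos hFy0]
      exact div_le_div_of_nonneg_right hab hFy0.le
    calc |f i x * (F y - F x) / (F x * F y) + (f i x - f i y) / F y|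
        ≤ |f i x * (F y - F x) / (F x * F y)| + |(f i x - f i y) / F y| := abs_add_le _ _
      _ ≤ (n : ℝ) * dist x y / F y + dist x y / F y := add_le_add h1 h2
      _ = ((n:ℝ) + 1) * dist x y / F y := by ring
  have final : ((n:ℝ) + 1) * dist x y / F y < ε := by
    have h1 : ((n:ℝ) + 1) * dist x y / F y ≤ ((n:ℝ) + 1) * t ^ α / (t ^ α * t ^ α / 2) := by
      apply div_le_div₀ (by positivity) _ (by positivity) hFy
      exact mul_le_mul_of_nonneg_left hdle.le (by positivity)
    have h2 : ((n:ℝ) + 1) * t ^ α / (t ^ α * t ^ α / 2) = 2 * ((n:ℝ) + 1) / t ^ α := by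
      field_simp
    rw [h2] at h1
    have h3 : 2 * ((n:ℝ) + 1) / t ^ α < ε := by
      rw [div_lt_iff₀ htα0]
      have h4 : 2 * ((n:ℝ) + 1) / ε < t ^ α := htαε
      rw [div_lt_iff₀ hε] at h4
      nlinarith
    linarith
  linarith [key, final]
end

section
/- Let k ≥ 3 be a natural number and let 0 = b₀ < a₁ < b₁ < ⋯ < b_{n−1} < aₙ < bₙ < ⋯ be sequences of positive reals satisfying: (1) aₙ^(1/k) > 2^n; (2) b_{n−1} + b_{n−1}^(1/k) < aₙ; (4) bₙ = aₙ + aₙ^(2/k); (6) aₙ − b_{n−1} > 2^(n−1)·aₙ^(1/k); (7) bₙ − aₙ > 2^n·bₙ^(1/k). Then for any t and u with |u − t| ≤ t^(1/k): (i) if aₙ ≤ t < bₙ then b_{n−1} < u < a_{n+1}; (ii) if bₙ ≤ t < a_{n+1} then aₙ < u < b_{n+1}. -/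
open NNReal in
lemma rpow_add_le_aux {x y p : ℝ} (hx : 0 ≤ x) (hy : 0 ≤ y) (hp : 0 ≤ p) (hp1 : p ≤ 1) :
    (x + y) ^ p ≤ x ^ p + y ^ p := by
  have h := NNReal.rpow_add_le_add_rpow x.toNNReal y.toNNReal hp hp1
  have hxy : ((x.toNNReal + y.toNNReal : ℝ≥0) : ℝ) = x + y := by
    simp [Real.coe_toNNReal _ hx, Real.coe_toNNReal _ hy]
  calc (x + y) ^ p = (((x.toNNReal + y.toNNReal : ℝ≥0) : ℝ)) ^ p := by rw [hxy]
    _ = (((x.toNNReal + y.toNNReal) ^ p : ℝ≥0) : ℝ) := by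
        rw [NNReal.coe_rpow]
    _ ≤ ((x.toNNReal ^ p + y.toNNReal ^ p : ℝ≥0) : ℝ) := by exact_mod_cast h
    _ = x ^ p + y ^ p := by
        push_cast [NNReal.coe_rpow, Real.coe_toNNReal _ hx, Real.coe_toNNReal _ hy]
        ring

/-- Claim 3.2.1: with sequences `(aₙ)`, `(bₙ)` satisfying conditions
(1),(2),(4),(6),(7) of Lemma 3.1, for `|u − t| ≤ t ^ (1/k)`:
(i) if `aₙ ≤ t < bₙ` then `b_{n−1} < u < a_{n+1}`;
(ii) if `bₙ ≤ t < a_{n+1}` then `aₙ < u < b_{n+1}`. -/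
theorem stmt9 (k : ℕ) (hk : 3 ≤ k) (a b : ℕ → ℝ)
    (hb0 : b 0 = 0)
    (hord : ∀ n, 1 ≤ n → b (n - 1) < a n ∧ a n < b n)
    (h1 : ∀ n, 1 ≤ n → (a n) ^ ((1:ℝ)/k) > 2 ^ n)
    (h2 : ∀ n, 1 ≤ n → b (n - 1) + (b (n - 1)) ^ ((1:ℝ)/k) < a n)
    (h4 : ∀ n, 1 ≤ n → b n = a n + (a n) ^ ((2:ℝ)/k))
    (h6 : ∀ n, 1 ≤ n → a n - b (n - 1) > 2 ^ (n - 1) * (a n) ^ ((1:ℝ)/k))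
    (h7 : ∀ n, 1 ≤ n → b n - a n > 2 ^ n * (b n) ^ ((1:ℝ)/k)) :
    ∀ n, 1 ≤ n → ∀ t u : ℝ, |u - t| ≤ t ^ ((1:ℝ)/k) →
      ((a n ≤ t ∧ t < b n) → b (n - 1) < u ∧ u < a (n + 1)) ∧
      ((b n ≤ t ∧ t < a (n + 1)) → a n < u ∧ u < b (n + 1)) := by
  have hkR : (3:ℝ) ≤ (k:ℝ) := by exact_mod_cast hk
  have hkpos : (0:ℝ) < k := by linarith
  have hek : (0:ℝ) ≤ 1/k := by positivity
  have hek1 : (1:ℝ)/k ≤ 1 := by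
    rw [div_le_one hkpos]; linarith
  have h2k1 : (2:ℝ)/k ≤ 1 := by
    rw [div_le_one hkpos]; linarith
  -- nonnegativity of b
  have hbnn : ∀ m, 0 ≤ b m := by
    intro m
    induction m with
    | zero => rw [hb0]
    | succ p ih =>
      have h := hord (p+1) (by omega)
      simpa using le_of_lt (lt_trans (lt_of_le_of_lt ih h.1) h.2)
  -- basic facts about a m for m ≥ 1
  have ha_pos : ∀ m, 1 ≤ m → 0 < a m := fun m hm =>
    lt_of_le_of_lt (hbnn (m-1)) (hord m hm).1
  have h1' : ∀ m, 1 ≤ m → 2 < (a m) ^ ((1:ℝ)/k) := by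
    intro m hm
    have : (2:ℝ) ≤ 2 ^ m := by
      calc (2:ℝ) = 2^1 := by norm_num
      _ ≤ 2^m := by exact pow_le_pow_right₀ one_le_two hm
    linarith [h1 m hm]
  have ha1 : ∀ m, 1 ≤ m → 1 ≤ a m := by
    intro m hm
    by_contra h
    push_neg at h
    have := Real.rpow_le_one (le_of_lt (ha_pos m hm)) h.le hek
    linarith [h1' m hm]
  have hsq : ∀ m, 1 ≤ m → (a m) ^ ((2:ℝ)/k) = ((a m) ^ ((1:ℝ)/k))^2 := by
    intro m hm
    have he : ((2:ℝ)/k) = (1/k) * ((2:ℕ):ℝ) := by push_cast; ring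
    rw [he, Real.rpow_mul (ha_pos m hm).le, Real.rpow_natCast]
  have ha2k : ∀ m, 1 ≤ m → (a m) ^ ((2:ℝ)/k) ≤ a m := by
    intro m hm
    calc (a m) ^ ((2:ℝ)/k) ≤ (a m) ^ (1:ℝ) :=
      Real.rpow_le_rpow_of_exponent_le (ha1 m hm) h2k1
    _ = a m := Real.rpow_one _
  -- key1 : a n - b (n-1) > 2 * (a n)^(1/k)
  have key1 : ∀ m, 1 ≤ m → a m - b (m-1) > 2 * (a m) ^ ((1:ℝ)/k) := by
    intro m hm
    rcases Nat.lt_or_ge m 2 with hm2 | hm2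
    · have hm1 : m = 1 := by omega
      subst hm1
      simp only [Nat.sub_self, hb0, sub_zero]
      have := hsq 1 le_rfl
      have h2a := h1' 1 le_rfl
      nlinarith [ha2k 1 le_rfl]
    · have h6' := h6 m hm
      have : (2:ℝ) ≤ 2 ^ (m-1) := by
        calc (2:ℝ) = 2^1 := by norm_num
        _ ≤ 2^(m-1) := by exact pow_le_pow_right₀ one_le_two (by omega)
      nlinarith [h1' m hm]
  -- key2 : (b m)^(1/k) ≤ 2 * (a m)^(1/k)
  have key2 : ∀ m, 1 ≤ m → (b m) ^ ((1:ℝ)/k) ≤ 2 * (a m) ^ ((1:ℝ)/k) := by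
    intro m hm
    have hb2a : b m ≤ 2 * a m := by
      rw [h4 m hm]; linarith [ha2k m hm]
    calc (b m) ^ ((1:ℝ)/k) ≤ (2 * a m) ^ ((1:ℝ)/k) :=
          Real.rpow_le_rpow (hbnn m) hb2a hek
      _ = 2 ^ ((1:ℝ)/k) * (a m) ^ ((1:ℝ)/k) :=
          Real.mul_rpow (by norm_num) (ha_pos m hm).le
      _ ≤ 2 * (a m) ^ ((1:ℝ)/k) := by
          have h21 : (2:ℝ) ^ ((1:ℝ)/k) ≤ 2 ^ (1:ℝ) :=
            Real.rpow_le_rpow_of_exponent_le one_le_two hek1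
          rw [Real.rpow_one] at h21
          have := Real.rpow_nonneg (ha_pos m hm).le ((1:ℝ)/k)
          nlinarith
  intro n hn t u hu
  rw [abs_le] at hu
  have hn1 : (1:ℕ) ≤ n + 1 := by omega
  constructor
  · rintro ⟨hat, htb⟩
    have ht_pos : 0 < t := lt_of_lt_of_le (ha_pos n hn) hat
    have htk : t ^ ((1:ℝ)/k) ≤ (b n) ^ ((1:ℝ)/k) :=
      Real.rpow_le_rpow ht_pos.le htb.le hek
    constructor
    · -- u > b (n-1)
      have := key1 n hn
      have := key2 n hn
      linarith
    · -- u < a (n+1)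
      have h2' := h2 (n+1) hn1
      simp only [Nat.add_sub_cancel] at h2'
      linarith
  · rintro ⟨hbt, hta⟩
    have hb1 : 1 ≤ b n := le_trans (ha1 n hn) (hord n hn).2.le
    have ht_pos : 0 < t := lt_of_lt_of_le (by linarith : (0:ℝ) < b n) hbt
    constructor
    · -- u > a n
      set d := t - b n with hd
      have hd0 : 0 ≤ d := by simp [hd]; linarith
      have hsub : t ^ ((1:ℝ)/k) ≤ (b n) ^ ((1:ℝ)/k) + d ^ ((1:ℝ)/k) := by
        have : t = b n + d := by ring
        rw [this]
        exact rpow_add_le_aux (hbnn n) hd0 hek hek1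
      have hdd : d - d ^ ((1:ℝ)/k) ≥ -1 := by
        rcases le_or_gt d 1 with h | h
        · have : d ^ ((1:ℝ)/k) ≤ 1 := Real.rpow_le_one hd0 h hek
          linarith
        · have : d ^ ((1:ℝ)/k) ≤ d ^ (1:ℝ) :=
            Real.rpow_le_rpow_of_exponent_le h.le hek1
          rw [Real.rpow_one] at this
          linarith
      have hbk1 : 1 ≤ (b n) ^ ((1:ℝ)/k) := by
        calc (1:ℝ) = 1 ^ ((1:ℝ)/k) := (Real.one_rpow _).symm
        _ ≤ (b n) ^ ((1:ℝ)/k) := Real.rpow_le_rpow (by norm_num) hb1 hek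
      have h7' := h7 n hn
      have h2n : (2:ℝ) ≤ 2 ^ n := by
        calc (2:ℝ) = 2^1 := by norm_num
        _ ≤ 2^n := by exact pow_le_pow_right₀ one_le_two hn
      have : t - u ≤ t ^ ((1:ℝ)/k) := by linarith
      nlinarith
    · -- u < b (n+1)
      have htk : t ^ ((1:ℝ)/k) ≤ (a (n+1)) ^ ((1:ℝ)/k) :=
        Real.rpow_le_rpow ht_pos.le hta.le hek
      have h12 : (a (n+1)) ^ ((1:ℝ)/k) ≤ (a (n+1)) ^ ((2:ℝ)/k) :=
        Real.rpow_le_rpow_of_exponent_le (ha1 (n+1) hn1)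
          (by rw [div_le_div_iff₀ hkpos hkpos]; nlinarith)
      have h4' := h4 (n+1) hn1
      linarith
end

section
/- With sequences (aₙ), (bₙ) and k as in the conditions (1),(2),(4),(6),(7) of Lemma 3.1, define ψ : [0,∞) → [0,1] piecewise by ψ(t) = 0 on [b_{2n−2}, a_{2n−1}), ψ(t) = (t − a_{2n−1})/(b_{2n−1} − a_{2n−1}) on [a_{2n−1}, b_{2n−1}), ψ(t) = 1 on [b_{2n−1}, a_{2n}), and ψ(t) = (b_{2n} − t)/(b_{2n} − a_{2n}) on [a_{2n}, b_{2n}). Then if aₙ ≤ t < a_{n+1} and |u − t| ≤ t^(1/k), we have |ψ(t) − ψ(u)| < 1/2^n. -/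
/-!
On the window `[b_{m-1}, a_{m+1})` the function `ψ` is an affine function, with slope
`±1 / (b_m - a_m)`, of the projection of its argument to `[a_m, b_m]`. By (7), `ψ` therefore varies
by less than `2^{-m}` between two points of the window whose projections are within `b_m^{1/k}`:
this holds when `|t - u| ≤ b_m^{1/k}`, the projection being `1`-Lipschitz, and also when
`b_m ≤ t` and `b_m - b_m^{1/k} ≤ u`. Since `x ↦ x - x^{1/k}` is monotone on `[1, ∞)`, the gaps (6)
and (7) place `t` and `u` in a common window, with `m = n` or `m = n + 1`, in one of these situations.
-/

open Set Real

theorem Real.monotoneOn_sub_rpow {p : ℝ} (hp0 : 0 ≤ p) (hp1 : p ≤ 1) :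
    MonotoneOn (fun x : ℝ => x - x ^ p) (Ici 1) := by
  intro x (hx : 1 ≤ x) y _ hxy
  have hx0 : 0 < x := one_pos.trans_le hx
  -- Bernoulli's inequality for `(y / x) ^ p`, then `p * x ^ p / x ≤ 1`.
  have hbern : (y / x) ^ p ≤ 1 + p * (y / x - 1) := by
    simpa using rpow_one_add_le_one_add_mul_self (s := y / x - 1)
      (by linarith [div_nonneg (hx0.le.trans hxy) hx0.le]) hp0 hp1
  have hy : y ^ p = x ^ p * (y / x) ^ p := by
    rw [← mul_rpow hx0.le (div_nonneg (hx0.le.trans hxy) hx0.le), mul_div_cancel₀ _ hx0.ne']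
  have hxp : x ^ p / x ≤ 1 := (div_le_one hx0).2 (rpow_le_self_of_one_le hx hp1)
  have hcoef : p * (x ^ p / x) ≤ 1 :=
    mul_le_one₀ hp1 (div_nonneg (rpow_nonneg hx0.le p) hx0.le) hxp
  suffices y ^ p - x ^ p ≤ y - x by dsimp only; linarith
  calc y ^ p - x ^ p = x ^ p * ((y / x) ^ p - 1) := by rw [hy]; ring
    _ ≤ x ^ p * (p * (y / x - 1)) := by gcongr; linarith
    _ = p * (x ^ p / x) * (y - x) := by field_simp
    _ ≤ y - x := mul_le_of_le_one_left (by linarith) hcoef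

theorem eq_add_mul_projIcc_of_ramp {f : ℝ → ℝ} {L a b R c s : ℝ} (hab : a < b)
    (h₀ : ∀ x, L ≤ x → x < a → f x = c)
    (h₁ : ∀ x, a ≤ x → x < b → f x = c + s * ((x - a) / (b - a)))
    (h₂ : ∀ x, b ≤ x → x < R → f x = c + s) {x : ℝ} (hx : x ∈ Ico L R) :
    f x = c + s * ((projIcc a b hab.le x - a) / (b - a)) := by
  rcases lt_or_ge x a with hxa | hax
  · simp [h₀ x hx.1 hxa, projIcc_of_le_left _ hxa.le]
  rcases lt_or_ge x b with hxb | hbx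
  · rw [h₁ x hax hxb, projIcc_of_mem _ ⟨hax, hxb.le⟩]
  · rw [h₂ x hbx hx.2, projIcc_of_right_le _ hbx, div_self (sub_ne_zero.2 hab.ne'), mul_one]

theorem abs_sub_eq_of_ramp {f : ℝ → ℝ} {L a b R c s : ℝ} (hab : a < b)
    (h₀ : ∀ x, L ≤ x → x < a → f x = c)
    (h₁ : ∀ x, a ≤ x → x < b → f x = c + s * ((x - a) / (b - a)))
    (h₂ : ∀ x, b ≤ x → x < R → f x = c + s) {x y : ℝ} (hx : x ∈ Ico L R) (hy : y ∈ Ico L R) :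
    |f x - f y| = |s| * |(projIcc a b hab.le x : ℝ) - projIcc a b hab.le y| / (b - a) := by
  rw [eq_add_mul_projIcc_of_ramp hab h₀ h₁ h₂ hx, eq_add_mul_projIcc_of_ramp hab h₀ h₁ h₂ hy,
    add_sub_add_left_eq_sub, ← mul_sub, ← sub_div, sub_sub_sub_cancel_right, abs_mul, abs_div,
    abs_of_pos (sub_pos.2 hab), mul_div_assoc]

theorem abs_projIcc_sub_projIcc_le_of_le {a b d t u : ℝ} (h : a ≤ b) (hd : a ≤ b - d)
    (hd0 : 0 ≤ d) (ht : b ≤ t) (hu : b - d ≤ u) :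
    |(projIcc a b h t : ℝ) - projIcc a b h u| ≤ d := by
  have hproj := monotone_projIcc h hu
  rw [projIcc_of_mem h ⟨hd, by linarith⟩, ← Subtype.coe_le_coe] at hproj
  rw [projIcc_of_right_le h ht, abs_of_nonneg (sub_nonneg.2 (projIcc a b h u).2.2)]
  linarith

/-- Conditions (6) and (7) of Lemma 3.1, with `p = 1 / k`, on sequences starting at `b 0 = 0`. -/
structure GapSequences (p : ℝ) (a b : ℕ → ℝ) : Prop where
  b_zero : b 0 = 0
  ordered : ∀ n, 1 ≤ n → b (n - 1) < a n ∧ a n < b n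
  gap_flat : ∀ n, 1 ≤ n → a n - b (n - 1) > 2 ^ (n - 1) * a n ^ p
  gap_ramp : ∀ n, 1 ≤ n → b n - a n > 2 ^ n * b n ^ p

structure AlternatingRamp (a b : ℕ → ℝ) (ψ : ℝ → ℝ) : Prop where
  zero : ∀ n, 1 ≤ n → ∀ t, b (2*n - 2) ≤ t → t < a (2*n - 1) → ψ t = 0
  up : ∀ n, 1 ≤ n → ∀ t, a (2*n - 1) ≤ t → t < b (2*n - 1) →
    ψ t = (t - a (2*n - 1)) / (b (2*n - 1) - a (2*n - 1))
  one : ∀ n, 1 ≤ n → ∀ t, b (2*n - 1) ≤ t → t < a (2*n) → ψ t = 1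
  down : ∀ n, 1 ≤ n → ∀ t, a (2*n) ≤ t → t < b (2*n) →
    ψ t = (b (2*n) - t) / (b (2*n) - a (2*n))

theorem AlternatingRamp.abs_sub_eq {a b : ℕ → ℝ} {ψ : ℝ → ℝ} (hψ : AlternatingRamp a b ψ)
    {m : ℕ} (hm : 1 ≤ m) (hab : a m < b m) {x y : ℝ}
    (hx : x ∈ Ico (b (m - 1)) (a (m + 1))) (hy : y ∈ Ico (b (m - 1)) (a (m + 1))) :
    |ψ x - ψ y| =
      |(projIcc (a m) (b m) hab.le x : ℝ) - projIcc (a m) (b m) hab.le y| / (b m - a m) := by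
  obtain ⟨j, rfl | rfl⟩ := Nat.even_or_odd' m
  · have hzero := hψ.zero (j + 1) le_add_self
    rw [show 2 * (j + 1) - 2 = 2 * j by omega, show 2 * (j + 1) - 1 = 2 * j + 1 by omega] at hzero
    have hdown : ∀ t, a (2 * j) ≤ t → t < b (2 * j) →
        ψ t = 1 + -1 * ((t - a (2 * j)) / (b (2 * j) - a (2 * j))) := fun t h₁ h₂ => by
      rw [hψ.down j (by omega) t h₁ h₂]
      field_simp [(sub_pos.2 hab).ne']
      ring
    simpa using abs_sub_eq_of_ramp hab (hψ.one j (by omega)) hdown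
      (fun t h₁ h₂ => by rw [hzero t h₁ h₂]; ring) hx hy
  · have hzero := hψ.zero (j + 1) le_add_self
    have hup := hψ.up (j + 1) le_add_self
    have hone := hψ.one (j + 1) le_add_self
    rw [show 2 * (j + 1) - 1 = 2 * j + 1 by omega] at hzero hup hone
    simpa using abs_sub_eq_of_ramp (c := 0) (s := 1) hab hzero
      (fun t h₁ h₂ => by rw [hup t h₁ h₂]; ring) (fun t h₁ h₂ => by rw [hone t h₁ h₂]; ring) hx hy

namespace GapSequences

variable {p : ℝ} {a b : ℕ → ℝ}

theorem b_nonneg (hs : GapSequences p a b) : ∀ n, 0 ≤ b n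
  | 0 => hs.b_zero.ge
  | n + 1 => by
    have := hs.ordered (n + 1) le_add_self
    simp only [Nat.add_sub_cancel] at this
    linarith [b_nonneg hs n]

theorem b_lt_a_succ (hs : GapSequences p a b) (n : ℕ) : b n < a (n + 1) := by
  simpa using (hs.ordered (n + 1) le_add_self).1

theorem a_lt_a_succ (hs : GapSequences p a b) {n : ℕ} (hn : 1 ≤ n) : a n < a (n + 1) :=
  (hs.ordered n hn).2.trans (hs.b_lt_a_succ n)

theorem one_lt_a (hs : GapSequences p a b) (hp : p ≤ 1) {n : ℕ} (hn : 1 ≤ n) : 1 < a n := by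
  have ha0 : 0 ≤ a n := (hs.b_nonneg _).trans (hs.ordered n hn).1.le
  by_contra! ha1
  have hself : a n ≤ a n ^ p := self_le_rpow_of_le_one ha0 ha1 hp
  have htwo : (1 : ℝ) ≤ 2 ^ (n - 1) := one_le_pow₀ one_le_two
  nlinarith [hs.gap_flat n hn, hs.b_nonneg (n - 1), rpow_nonneg ha0 p]

theorem b_pred_lt_of_a_le (hs : GapSequences p a b) (hp0 : 0 ≤ p) (hp1 : p ≤ 1) {n : ℕ}
    (hn : 1 ≤ n) {t u : ℝ} (ht : a n ≤ t) (hu : t - t ^ p ≤ u) : b (n - 1) < u := by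
  have hmono := monotoneOn_sub_rpow hp0 hp1 (hs.one_lt_a hp1 hn).le
    ((hs.one_lt_a hp1 hn).le.trans ht) ht
  have htwo : (1 : ℝ) ≤ 2 ^ (n - 1) := one_le_pow₀ one_le_two
  nlinarith [hs.gap_flat n hn, rpow_nonneg (zero_le_one.trans (hs.one_lt_a hp1 hn).le) p]

theorem a_lt_b_sub_rpow (hs : GapSequences p a b) {n : ℕ} (hn : 1 ≤ n) :
    a n < b n - b n ^ p := by
  have htwo : (1 : ℝ) ≤ 2 ^ n := one_le_pow₀ one_le_two
  nlinarith [hs.gap_ramp n hn, rpow_nonneg (hs.b_nonneg n) p]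

theorem b_sub_rpow_le_of_b_le (hs : GapSequences p a b) (hp0 : 0 ≤ p) (hp1 : p ≤ 1) {n : ℕ}
    (hn : 1 ≤ n) {t u : ℝ} (ht : b n ≤ t) (hu : t - t ^ p ≤ u) : b n - b n ^ p ≤ u := by
  have hb1 : 1 ≤ b n := ((hs.one_lt_a hp1 hn).trans (hs.ordered n hn).2).le
  exact (monotoneOn_sub_rpow hp0 hp1 hb1 (hb1.trans ht) ht).trans hu

theorem lt_a_succ_of_le_b (hs : GapSequences p a b) (hp0 : 0 ≤ p) {n : ℕ} {t u : ℝ}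
    (ht0 : 0 ≤ t) (ht : t ≤ b n) (hu : u ≤ t + t ^ p) : u < a (n + 1) := by
  have hgap := hs.gap_flat (n + 1) le_add_self
  simp only [Nat.add_sub_cancel] at hgap
  have hpow : t ^ p ≤ a (n + 1) ^ p := rpow_le_rpow ht0 (ht.trans (hs.b_lt_a_succ n).le) hp0
  have htwo : (1 : ℝ) ≤ 2 ^ n := one_le_pow₀ one_le_two
  nlinarith [rpow_nonneg (ht0.trans (ht.trans (hs.b_lt_a_succ n).le)) p]

theorem lt_b_succ_of_le_a_succ (hs : GapSequences p a b) (hp0 : 0 ≤ p) {n : ℕ} {t u : ℝ}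
    (ht0 : 0 ≤ t) (ht : t ≤ a (n + 1)) (hu : u ≤ t + t ^ p) : u < b (n + 1) := by
  have hab := (hs.ordered (n + 1) le_add_self).2
  have hpow : t ^ p ≤ b (n + 1) ^ p := rpow_le_rpow ht0 (ht.trans hab.le) hp0
  have htwo : (1 : ℝ) ≤ 2 ^ (n + 1) := one_le_pow₀ one_le_two
  nlinarith [hs.gap_ramp (n + 1) le_add_self, rpow_nonneg (ht0.trans (ht.trans hab.le)) p]

theorem abs_sub_lt_of_ramp {ψ : ℝ → ℝ} (hs : GapSequences p a b) (hψ : AlternatingRamp a b ψ)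
    {m : ℕ} (hm : 1 ≤ m) {x y : ℝ}
    (hx : x ∈ Ico (b (m - 1)) (a (m + 1))) (hy : y ∈ Ico (b (m - 1)) (a (m + 1)))
    (hxy : |(projIcc (a m) (b m) (hs.ordered m hm).2.le x : ℝ) -
      projIcc (a m) (b m) (hs.ordered m hm).2.le y| ≤ b m ^ p) :
    |ψ x - ψ y| < 1 / 2 ^ m := by
  rw [hψ.abs_sub_eq hm (hs.ordered m hm).2 hx hy,
    div_lt_div_iff₀ (sub_pos.2 (hs.ordered m hm).2) (by positivity)]
  nlinarith [hs.gap_ramp m hm, mul_le_mul_of_nonneg_left hxy (by positivity : (0 : ℝ) ≤ 2 ^ m)]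

end GapSequences

theorem stmt10_general (k : ℕ) (a b : ℕ → ℝ)
    (hb0 : b 0 = 0)
    (hord : ∀ n, 1 ≤ n → b (n - 1) < a n ∧ a n < b n)
    (h6 : ∀ n, 1 ≤ n → a n - b (n - 1) > 2 ^ (n - 1) * (a n) ^ ((1:ℝ)/k))
    (h7 : ∀ n, 1 ≤ n → b n - a n > 2 ^ n * (b n) ^ ((1:ℝ)/k))
    (ψ : ℝ → ℝ)
    (hψ0 : ∀ n, 1 ≤ n → ∀ t, b (2*n - 2) ≤ t → t < a (2*n - 1) → ψ t = 0)
    (hψup : ∀ n, 1 ≤ n → ∀ t, a (2*n - 1) ≤ t → t < b (2*n - 1) →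
      ψ t = (t - a (2*n - 1)) / (b (2*n - 1) - a (2*n - 1)))
    (hψ1 : ∀ n, 1 ≤ n → ∀ t, b (2*n - 1) ≤ t → t < a (2*n) → ψ t = 1)
    (hψdown : ∀ n, 1 ≤ n → ∀ t, a (2*n) ≤ t → t < b (2*n) →
      ψ t = (b (2*n) - t) / (b (2*n) - a (2*n))) :
    ∀ n, 1 ≤ n → ∀ t u : ℝ, a n ≤ t → t < a (n + 1) →
      |u - t| ≤ t ^ ((1:ℝ)/k) → |ψ t - ψ u| < 1 / 2 ^ n := by
  intro n hn t u hat hta htu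
  have hs : GapSequences ((1:ℝ)/k) a b := ⟨hb0, hord, h6, h7⟩
  have hψ : AlternatingRamp a b ψ := ⟨hψ0, hψup, hψ1, hψdown⟩
  have hp0 : (0:ℝ) ≤ 1 / k := by positivity
  have hp1 : (1:ℝ) / k ≤ 1 := by simpa using Nat.cast_inv_le_one (α := ℝ) k
  have ht0 : 0 ≤ t := (zero_le_one.trans (hs.one_lt_a hp1 hn).le).trans hat
  obtain ⟨hu_lo, hu_hi⟩ : t - t ^ ((1:ℝ)/k) ≤ u ∧ u ≤ t + t ^ ((1:ℝ)/k) := by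
    constructor <;> linarith [abs_le.1 htu]
  have hproj_le {m : ℕ} (h : a m ≤ b m) (htm : t ≤ b m) :
      |(projIcc (a m) (b m) h t : ℝ) - projIcc (a m) (b m) h u| ≤ b m ^ ((1:ℝ)/k) :=
    (abs_projIcc_sub_projIcc h).trans <| by
      rw [abs_sub_comm]; exact htu.trans (rpow_le_rpow ht0 htm hp0)
  rcases lt_or_ge t (b n) with htb | htb
  · exact hs.abs_sub_lt_of_ramp hψ hn ⟨(hs.ordered n hn).1.le.trans hat, hta⟩
      ⟨(hs.b_pred_lt_of_a_le hp0 hp1 hn hat hu_lo).le, hs.lt_a_succ_of_le_b hp0 ht0 htb.le hu_hi⟩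
      (hproj_le _ htb.le)
  rcases lt_or_ge u (a (n + 1)) with hua | hua
  · have hu_b := hs.b_sub_rpow_le_of_b_le hp0 hp1 hn htb hu_lo
    exact hs.abs_sub_lt_of_ramp hψ hn ⟨(hs.ordered n hn).1.le.trans hat, hta⟩
      ⟨(hs.ordered n hn).1.le.trans ((hs.a_lt_b_sub_rpow hn).le.trans hu_b), hua⟩
      (abs_projIcc_sub_projIcc_le_of_le _ (hs.a_lt_b_sub_rpow hn).le
        (rpow_nonneg (hs.b_nonneg n) _) htb hu_b)
  · refine (hs.abs_sub_lt_of_ramp hψ (m := n + 1) le_add_self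
      ⟨by simpa using htb, hta.trans (hs.a_lt_a_succ le_add_self)⟩
      ⟨by simpa using (hs.b_lt_a_succ n).le.trans hua,
        (hs.lt_b_succ_of_le_a_succ hp0 ht0 hta.le hu_hi).trans (hs.b_lt_a_succ _)⟩
      (hproj_le _ (hta.trans (hs.ordered (n + 1) le_add_self).2).le)).trans_le ?_
    exact one_div_pow_le_one_div_pow_of_le one_le_two le_self_add

/-- Claim 3.2.2: with sequences `(aₙ)`, `(bₙ)` and `k ≥ 3` as in Lemma 3.1 and
`ψ` the piecewise-linear function of Proposition 3.2, if `aₙ ≤ t < a_{n+1}` and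
`|u − t| ≤ t ^ (1/k)` then `|ψ(t) − ψ(u)| < 1/2ⁿ`. -/
theorem stmt10 (k : ℕ) (hk : 3 ≤ k) (a b : ℕ → ℝ)
    (hb0 : b 0 = 0)
    (hord : ∀ n, 1 ≤ n → b (n - 1) < a n ∧ a n < b n)
    (h1 : ∀ n, 1 ≤ n → (a n) ^ ((1:ℝ)/k) > 2 ^ n)
    (h2 : ∀ n, 1 ≤ n → b (n - 1) + (b (n - 1)) ^ ((1:ℝ)/k) < a n)
    (h4 : ∀ n, 1 ≤ n → b n = a n + (a n) ^ ((2:ℝ)/k))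
    (h6 : ∀ n, 1 ≤ n → a n - b (n - 1) > 2 ^ (n - 1) * (a n) ^ ((1:ℝ)/k))
    (h7 : ∀ n, 1 ≤ n → b n - a n > 2 ^ n * (b n) ^ ((1:ℝ)/k))
    (ψ : ℝ → ℝ)
    (hψ0 : ∀ n, 1 ≤ n → ∀ t, b (2*n - 2) ≤ t → t < a (2*n - 1) → ψ t = 0)
    (hψup : ∀ n, 1 ≤ n → ∀ t, a (2*n - 1) ≤ t → t < b (2*n - 1) →
      ψ t = (t - a (2*n - 1)) / (b (2*n - 1) - a (2*n - 1)))
    (hψ1 : ∀ n, 1 ≤ n → ∀ t, b (2*n - 1) ≤ t → t < a (2*n) → ψ t = 1)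
    (hψdown : ∀ n, 1 ≤ n → ∀ t, a (2*n) ≤ t → t < b (2*n) →
      ψ t = (b (2*n) - t) / (b (2*n) - a (2*n))) :
    ∀ n, 1 ≤ n → ∀ t u : ℝ, a n ≤ t → t < a (n + 1) →
      |u - t| ≤ t ^ ((1:ℝ)/k) → |ψ t - ψ u| < 1 / 2 ^ n :=
  stmt10_general k a b hb0 hord h6 h7 ψ hψ0 hψup hψ1 hψdown
end

section
/- The function ψ defined as in Proposition 3.2 is Higson subpower on X = [0,∞) with the usual metric: for every asymptotically subpower function s and every ε > 0 there exists t₀ > 0 such that diam ψ(B(t, s(t))) < ε whenever t > t₀. -/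
lemma stmt11_aux (a : ℕ → ℝ) (N : ℕ) (t : ℝ)
    (hN : a N ≤ t) (hub : ∃ m, t < a (N + m + 1)) :
    ∃ n, N ≤ n ∧ a n ≤ t ∧ t < a (n + 1) := by
  classical
  refine ⟨N + Nat.find hub, Nat.le_add_right _ _, ?_, Nat.find_spec hub⟩
  rcases Nat.eq_zero_or_pos (Nat.find hub) with h | h
  · simpa [h] using hN
  · have hmin := Nat.find_min hub (m := Nat.find hub - 1) (by omega)
    push_neg at hmin
    have heq : N + (Nat.find hub - 1) + 1 = N + Nat.find hub := by omega
    rwa [heq] at hmin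

/-- Claim 3.2.3: the function `ψ` of Proposition 3.2 is Higson subpower on
`X = [0,∞)`: for every asymptotically subpower `s` and `ε > 0` there is
`t₀ > 0` with `diam ψ(B(t, s(t))) < ε` whenever `t > t₀`. -/
theorem stmt11 (k : ℕ) (hk : 3 ≤ k) (a b : ℕ → ℝ)
    (hb0 : b 0 = 0)
    (hord : ∀ n, 1 ≤ n → b (n - 1) < a n ∧ a n < b n)
    (h1 : ∀ n, 1 ≤ n → (a n) ^ ((1:ℝ)/k) > 2 ^ n)
    (h2 : ∀ n, 1 ≤ n → b (n - 1) + (b (n - 1)) ^ ((1:ℝ)/k) < a n)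
    (h4 : ∀ n, 1 ≤ n → b n = a n + (a n) ^ ((2:ℝ)/k))
    (h6 : ∀ n, 1 ≤ n → a n - b (n - 1) > 2 ^ (n - 1) * (a n) ^ ((1:ℝ)/k))
    (h7 : ∀ n, 1 ≤ n → b n - a n > 2 ^ n * (b n) ^ ((1:ℝ)/k))
    (ψ : ℝ → ℝ) (hrange : ∀ t, 0 ≤ t → ψ t ∈ Set.Icc (0:ℝ) 1)
    (hclaim : ∀ n, 1 ≤ n → ∀ t u : ℝ, 0 ≤ u → a n ≤ t → t < a (n + 1) →
      |u - t| ≤ t ^ ((1:ℝ)/k) → |ψ t - ψ u| < 1 / 2 ^ n)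
    (s : ℝ → ℝ) (hs : AsymptoticallySubpower s) :
    ∀ ε > (0:ℝ), ∃ t₀ > (0:ℝ), ∀ t > t₀,
      Metric.diam (ψ '' (Metric.closedBall t (s t) ∩ Set.Ici 0)) < ε := by
  intro ε hε
  have hk0 : (0:ℝ) < (k:ℝ) := by positivity
  have hk1 : (1:ℝ)/k ≤ 1 := by
    rw [div_le_one hk0]
    exact_mod_cast by omega
  -- a is increasing (for n ≥ 1)
  have hstep : ∀ n, 1 ≤ n → a n < a (n + 1) := by
    intro n hn
    have h₁ := (hord n hn).2
    have h₂ := (hord (n + 1) (by omega)).1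
    have : n + 1 - 1 = n := by omega
    rw [this] at h₂
    linarith
  have hpos : ∀ n, 1 ≤ n → 0 < a n := by
    intro n hn
    induction n with
    | zero => omega
    | succ m ih =>
      rcases Nat.lt_or_ge 1 (m + 1) with h | h
      · have hm : 1 ≤ m := by omega
        exact lt_trans (ih hm) (hstep m hm)
      · have h1' := (hord 1 le_rfl).1
        simp only [Nat.sub_self, hb0] at h1'
        have : m = 0 := by omega
        subst this
        simpa using h1'
  -- a n > 2 ^ n
  have hgt : ∀ n, 1 ≤ n → (2:ℝ) ^ n < a n := by
    intro n hn
    have h := h1 n hn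
    have h2n : (1:ℝ) ≤ 2 ^ n := one_le_pow₀ one_le_two
    have hge1 : 1 ≤ a n := by
      by_contra hlt
      push_neg at hlt
      have : (a n) ^ ((1:ℝ)/k) ≤ 1 :=
        Real.rpow_le_one (hpos n hn).le hlt.le (by positivity)
      linarith
    have hle : (a n) ^ ((1:ℝ)/k) ≤ a n := by
      calc (a n) ^ ((1:ℝ)/k) ≤ (a n) ^ (1:ℝ) :=
            Real.rpow_le_rpow_of_exponent_le hge1 hk1
        _ = a n := Real.rpow_one _
    linarith
  -- choose N with 2/2^N < ε and 1 ≤ N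
  obtain ⟨N0, hN0⟩ := pow_unbounded_of_one_lt (2/ε) (by norm_num : (1:ℝ) < 2)
  set N := max N0 1 with hNdef
  have hN1 : 1 ≤ N := le_max_right _ _
  have hNe : 2 / 2 ^ N < ε := by
    have h2 : (2:ℝ) ^ N0 ≤ 2 ^ N := pow_le_pow_right₀ one_le_two (le_max_left _ _)
    have : 2 / ε < 2 ^ N := lt_of_lt_of_le hN0 h2
    rw [div_lt_iff₀ (by positivity)]
    rw [div_lt_iff₀ hε] at this
    nlinarith [pow_pos (by norm_num : (0:ℝ) < 2) N]
  -- subpower bound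
  obtain ⟨t₁, ht₁pos, ht₁⟩ := hs ((1:ℝ)/k) (by positivity)
  refine ⟨max t₁ (a N), lt_max_of_lt_left ht₁pos, ?_⟩
  intro t ht
  have hst : s t < t ^ ((1:ℝ)/k) := ht₁ t (lt_of_le_of_lt (le_max_left _ _) ht)
  have htaN : a N ≤ t := le_of_lt (lt_of_le_of_lt (le_max_right _ _) ht)
  -- find n with a n ≤ t < a (n+1), N ≤ n
  have hub : ∃ m, t < a (N + m + 1) := by
    obtain ⟨m, hm⟩ := pow_unbounded_of_one_lt t (by norm_num : (1:ℝ) < 2)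
    refine ⟨m, ?_⟩
    have h1' : (2:ℝ) ^ m ≤ 2 ^ (N + m + 1) := pow_le_pow_right₀ one_le_two (by omega)
    have := hgt (N + m + 1) (by omega)
    linarith
  obtain ⟨n, hNn, hant, htan⟩ := stmt11_aux a N t htaN hub
  have hn1 : 1 ≤ n := le_trans hN1 hNn
  -- diameter bound
  have hdiam : Metric.diam (ψ '' (Metric.closedBall t (s t) ∩ Set.Ici 0)) ≤ 2 / 2 ^ n := by
    apply Metric.diam_le_of_forall_dist_le (by positivity)
    rintro x ⟨u, ⟨hu1, hu2⟩, rfl⟩ y ⟨v, ⟨hv1, hv2⟩, rfl⟩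
    have hud : |u - t| ≤ t ^ ((1:ℝ)/k) := by
      have := Metric.mem_closedBall.mp hu1
      rw [Real.dist_eq] at this
      linarith
    have hvd : |v - t| ≤ t ^ ((1:ℝ)/k) := by
      have := Metric.mem_closedBall.mp hv1
      rw [Real.dist_eq] at this
      linarith
    have hu := hclaim n hn1 t u hu2 hant htan hud
    have hv := hclaim n hn1 t v hv2 hant htan hvd
    rw [Real.dist_eq]
    have habs : |ψ u - ψ v| ≤ |ψ u - ψ t| + |ψ t - ψ v| := abs_sub_le _ _ _
    rw [abs_sub_comm (ψ u) (ψ t)] at habs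
    have : 2 / (2:ℝ) ^ n = 1 / 2 ^ n + 1 / 2 ^ n := by ring
    rw [this]
    linarith
  have h2n' : (2:ℝ) ^ N ≤ 2 ^ n := pow_le_pow_right₀ one_le_two hNn
  have hmono : 2 / (2:ℝ) ^ n ≤ 2 / 2 ^ N :=
    div_le_div_of_nonneg_left (by norm_num) (by positivity) h2n'
  linarith
end

section
/- The function ψ from Proposition 3.2 is not Higson sublinear: with ξ(t) = t^(2/k) (which is asymptotically sublinear since k ≥ 3), diam ψ(B(aₙ, ξ(aₙ))) = 1 for every n; in particular the diameters do not tend to 0. -/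
/-- `ψ` is not Higson sublinear: with `ξ(t) = t ^ (2/k)`, the diameter of
`ψ(B(aₙ, ξ(aₙ)))` equals `1` for every `n`; in particular these diameters do
not tend to `0`. -/
theorem stmt12 (k : ℕ) (hk : 3 ≤ k) (a b : ℕ → ℝ)
    (hpos : ∀ n, 1 ≤ n → 0 < a n)
    (h4 : ∀ n, 1 ≤ n → b n = a n + (a n) ^ ((2:ℝ)/k))
    (ψ : ℝ → ℝ) (hrange : ∀ t, 0 ≤ t → ψ t ∈ Set.Icc (0:ℝ) 1)
    (hends : ∀ n, 1 ≤ n → (ψ (a n) = 0 ∧ ψ (b n) = 1) ∨ (ψ (a n) = 1 ∧ ψ (b n) = 0))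
    (ξ : ℝ → ℝ) (hξ : ∀ t, ξ t = t ^ ((2:ℝ)/k)) :
    (∀ n, 1 ≤ n →
      Metric.diam (ψ '' (Metric.closedBall (a n) (ξ (a n)) ∩ Set.Ici 0)) = 1) ∧
    ¬ Filter.Tendsto
        (fun n => Metric.diam (ψ '' (Metric.closedBall (a n) (ξ (a n)) ∩ Set.Ici 0)))
        Filter.atTop (nhds 0) := by
  have hdiam : ∀ n, 1 ≤ n →
      Metric.diam (ψ '' (Metric.closedBall (a n) (ξ (a n)) ∩ Set.Ici 0)) = 1 := by
    intro n hn
    have hapos := hpos n hn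
    have hξnn : 0 ≤ ξ (a n) := by
      rw [hξ]; exact Real.rpow_nonneg hapos.le _
    have hma : a n ∈ Metric.closedBall (a n) (ξ (a n)) ∩ Set.Ici 0 :=
      ⟨Metric.mem_closedBall_self hξnn, hapos.le⟩
    have hmb : b n ∈ Metric.closedBall (a n) (ξ (a n)) ∩ Set.Ici 0 := by
      constructor
      · rw [Metric.mem_closedBall, h4 n hn, hξ, Real.dist_eq]
        rw [add_sub_cancel_left, abs_of_nonneg (Real.rpow_nonneg hapos.le _)]
      · rw [Set.mem_Ici, h4 n hn]
        have := Real.rpow_nonneg hapos.le ((2:ℝ)/k)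
        linarith
    have hsub : ψ '' (Metric.closedBall (a n) (ξ (a n)) ∩ Set.Ici 0) ⊆
        Set.Icc (0:ℝ) 1 := by
      rintro _ ⟨x, hx, rfl⟩
      exact hrange x hx.2
    have hbdd : Bornology.IsBounded
        (ψ '' (Metric.closedBall (a n) (ξ (a n)) ∩ Set.Ici 0)) :=
      (Metric.isBounded_Icc (0:ℝ) 1).subset hsub
    have hle : Metric.diam (ψ '' (Metric.closedBall (a n) (ξ (a n)) ∩ Set.Ici 0)) ≤ 1 := by
      have := Metric.diam_mono hsub (Metric.isBounded_Icc (0:ℝ) 1)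
      rwa [Real.diam_Icc (by norm_num : (0:ℝ) ≤ 1), sub_zero] at this
    have hge : 1 ≤ Metric.diam (ψ '' (Metric.closedBall (a n) (ξ (a n)) ∩ Set.Ici 0)) := by
      have hd : dist (ψ (a n)) (ψ (b n)) = 1 := by
        rcases hends n hn with ⟨h1, h2⟩ | ⟨h1, h2⟩ <;>
          simp [h1, h2, Real.dist_eq, abs_of_nonneg, abs_of_nonpos]
      calc (1:ℝ) = dist (ψ (a n)) (ψ (b n)) := hd.symm
        _ ≤ _ := Metric.dist_le_diam_of_mem hbdd ⟨_, hma, rfl⟩ ⟨_, hmb, rfl⟩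
    linarith
  refine ⟨hdiam, fun h => ?_⟩
  have h1 : Filter.Tendsto (fun _ : ℕ => (1:ℝ)) Filter.atTop (nhds 0) := by
    apply h.congr'
    filter_upwards [Filter.eventually_ge_atTop 1] with n hn
    exact hdiam n hn
  have := tendsto_nhds_unique h1 tendsto_const_nhds
  norm_num at this
end

section
/- Every compactification αX of X = [0,∞) is an irreducible continuum between 0 and every point z of αX \ X: there is no proper closed connected subset K of αX containing both 0 and z. Equivalently, if K ⊆ αX is closed, connected, 0 ∈ K, and z ∈ K for some z ∉ X, then K = αX. -/
/-- Lemma 3.5: every compactification `αX` of `X = [0,∞)` is irreducible between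
`0` and any point of the remainder: any closed connected subset containing the
image of `0` and a point outside the image of `X` is all of `αX`. -/
theorem stmt13 {A : Type*} [TopologicalSpace A] [CompactSpace A] [T2Space A]
    (e : {x : ℝ // 0 ≤ x} → A)
    (he : Topology.IsEmbedding e) (hdense : DenseRange e) :
    ∀ K : Set A, IsClosed K → IsConnected K →
      e ⟨0, le_refl 0⟩ ∈ K → (∃ z ∈ K, z ∉ Set.range e) →
      K = Set.univ := by
  rintro K hKc hKconn h0 ⟨z, hzK, hz⟩
  have hrangeval : IsClosed (Set.range (Subtype.val : {x : ℝ // 0 ≤ x} → ℝ)) := by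
    rw [Subtype.range_coe_subtype]
    exact isClosed_Ici
  have hrange : Set.range e ⊆ K := by
    rintro _ ⟨t₀, rfl⟩
    by_contra ht₀
    set S : Set {x : ℝ // 0 ≤ x} := Subtype.val ⁻¹' Set.Icc 0 ↑t₀ with hSdef
    set T : Set {x : ℝ // 0 ≤ x} := Subtype.val ⁻¹' Set.Ici ↑t₀ with hTdef
    have hScomp : IsCompact S :=
      Topology.IsInducing.isCompact_preimage Topology.IsInducing.subtypeVal hrangeval
        (isCompact_Icc (a := (0:ℝ)) (b := ↑t₀))
    set F : Set A := e '' S with hFdef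
    set G : Set A := closure (e '' T) with hGdef
    have hF : IsClosed F := (hScomp.image he.continuous).isClosed
    have hTclosed : IsClosed T := isClosed_Ici.preimage continuous_subtype_val
    have hG : IsClosed G := isClosed_closure
    have hcover : F ∪ G = Set.univ := by
      have hsub : Set.range e ⊆ F ∪ G := by
        rintro _ ⟨t, rfl⟩
        rcases le_total (t : ℝ) ↑t₀ with h | h
        · exact Or.inl ⟨t, ⟨t.2, h⟩, rfl⟩
        · exact Or.inr (subset_closure ⟨t, h, rfl⟩)
      have h1 := closure_mono hsub
      rw [hdense.closure_range, (hF.union hG).closure_eq] at h1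
      exact Set.eq_univ_of_univ_subset h1
    have hinter : F ∩ G ⊆ {e t₀} := by
      rintro _ ⟨⟨s, hs, rfl⟩, hsG⟩
      have h2 : s ∈ e ⁻¹' closure (e '' T) := hsG
      rw [← he.closure_eq_preimage_closure_image, hTclosed.closure_eq] at h2
      have hst : (t₀ : ℝ) ≤ (s : ℝ) := h2
      have : s = t₀ := Subtype.ext (le_antisymm hs.2 hst)
      simp [this]
    have ht0ne : t₀ ≠ ⟨0, le_refl 0⟩ := by rintro rfl; exact ht₀ h0
    have h0G : e ⟨0, le_refl 0⟩ ∉ G := by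
      intro h
      have h2 : (⟨0, le_refl 0⟩ : {x : ℝ // 0 ≤ x}) ∈ e ⁻¹' closure (e '' T) := h
      rw [← he.closure_eq_preimage_closure_image, hTclosed.closure_eq] at h2
      have h3 : (t₀ : ℝ) ≤ 0 := h2
      exact ht0ne (Subtype.ext (le_antisymm h3 t₀.2))
    have hzF : z ∉ F := fun h => hz (Set.image_subset_range e S h)
    -- separation of K
    have hKU : K ⊆ Gᶜ ∪ Fᶜ := by
      intro x hx
      by_contra hcon
      simp only [Set.mem_union, Set.mem_compl_iff, not_or, not_not] at hcon
      have : x ∈ F ∩ G := ⟨hcon.2, hcon.1⟩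
      have := hinter this
      rw [Set.mem_singleton_iff] at this
      exact ht₀ (this ▸ hx)
    have hne := hKconn.isPreconnected Gᶜ Fᶜ hG.isOpen_compl hF.isOpen_compl hKU
      ⟨e ⟨0, le_refl 0⟩, h0, h0G⟩ ⟨z, hzK, hzF⟩
    rcases hne with ⟨x, -, hxG, hxF⟩
    have : x ∈ F ∪ G := hcover ▸ Set.mem_univ x
    rcases this with h | h
    · exact hxF h
    · exact hxG h
  have : Set.univ ⊆ K := by
    have := closure_mono hrange
    rwa [hdense.closure_range, hKc.closure_eq] at this
  exact Set.eq_univ_of_univ_subset this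
end

section
/- In any compactification αX of X = [0,∞): if K is a closed subset of αX containing 0 and some z ∈ αX \ X, and t ∈ X with t ∉ K, then K ∩ [0,t) is a nonempty proper subset of K that is both closed and open in K; hence K is disconnected. -/
/-!
`[0,t)` is open in `X`, so for an inducing `e` there is an open `V ⊆ αX` with `e⁻¹ V = [0,t)`;
it contains `e([0,t))` and misses the closure of `e([t,∞))`. By density the closures of
`e([0,t))` and `e([t,∞))` cover `αX`, and `e([0,t])` is compact, hence closed. On a set `K`
missing `e t`, the trace of `e([0,t))` is therefore both `K ∩ e([0,t])` and the complement in `K`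
of the closure of `e([t,∞))`, so it is clopen in `K`; it contains `e 0` but not the remainder
point `z`.
-/

open Set Topology

section Separation

variable {X A : Type*} [TopologicalSpace A] {e : X → A}

theorem Topology.IsInducing.disjoint_image_closure_image_compl [TopologicalSpace X]
    (he : IsInducing e) {U : Set X} (hU : IsOpen U) : Disjoint (e '' U) (closure (e '' Uᶜ)) := by
  obtain ⟨V, hV, rfl⟩ := he.isOpen_iff.mp hU
  rw [disjoint_comm, ← subset_compl_iff_disjoint_right]
  refine closure_minimal ?_ hV.isClosed_compl |>.trans (compl_subset_compl.mpr ?_)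
  · rintro _ ⟨x, hx, rfl⟩ hxV
    exact hx hxV
  · exact image_preimage_subset e V

theorem DenseRange.closure_image_union_closure_image_compl (hd : DenseRange e) (U : Set X) :
    closure (e '' U) ∪ closure (e '' Uᶜ) = univ := by
  rw [← closure_union, ← image_union, union_compl_self, image_univ, hd.closure_range]

theorem isClopen_preimage_image_of_inter_subset [TopologicalSpace X] (he : IsInducing e)
    (hd : DenseRange e) {U S : Set X} (hU : IsOpen U) (hUS : U ⊆ S) (hS : IsClosed (e '' S))
    {K : Set A} (hK : K ∩ e '' S ⊆ e '' U) : IsClopen (Subtype.val ⁻¹' (e '' U) : Set K) := by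
  have hclosed : (Subtype.val ⁻¹' (e '' U) : Set K) = Subtype.val ⁻¹' (e '' S) :=
    Subset.antisymm (preimage_mono (image_mono hUS)) fun k hk => hK ⟨k.2, hk⟩
  have hopen : (Subtype.val ⁻¹' (e '' U) : Set K) = Subtype.val ⁻¹' (closure (e '' Uᶜ))ᶜ := by
    refine Subset.antisymm
      (fun k hk => (he.disjoint_image_closure_image_compl hU).notMem_of_mem_left hk)
      fun k hk => hK ⟨k.2, ?_⟩
    have := hd.closure_image_union_closure_image_compl U ▸ mem_univ k.1
    exact closure_minimal (image_mono hUS) hS (this.resolve_right hk)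
  constructor
  · rw [hclosed]
    exact hS.preimage continuous_subtype_val
  · rw [hopen]
    exact isClosed_closure.isOpen_compl.preimage continuous_subtype_val

end Separation

theorem not_isPreconnected_of_isClopen_preimage {A : Type*} [TopologicalSpace A] {K C : Set A}
    (hC : IsClopen (Subtype.val ⁻¹' C : Set K)) {x y : A} (hx : x ∈ K ∩ C) (hy : y ∈ K \ C) :
    ¬ IsPreconnected K := by
  intro hK
  have := Subtype.preconnectedSpace hK
  rcases isClopen_iff.mp hC with h | h
  · exact eq_empty_iff_forall_notMem.mp h ⟨x, hx.1⟩ hx.2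
  · exact hy.2 (eq_univ_iff_forall.mp h ⟨y, hy.1⟩)

theorem stmt14_general {A : Type*} [TopologicalSpace A] [T2Space A]
    (e : {x : ℝ // 0 ≤ x} → A)
    (he : Topology.IsEmbedding e) (hdense : DenseRange e)
    (K : Set A)
    (h0 : e ⟨0, le_refl 0⟩ ∈ K)
    (z : A) (hzK : z ∈ K) (hz : z ∉ Set.range e)
    (t : {x : ℝ // 0 ≤ x}) (ht : e t ∉ K) :
    (K ∩ e '' {s | s.1 < t.1}).Nonempty ∧
    K ∩ e '' {s | s.1 < t.1} ≠ K ∧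
    IsClopen (Subtype.val ⁻¹' (e '' {s | s.1 < t.1}) : Set K) ∧
    ¬ IsPreconnected K := by
  have hS : IsCompact {s : {x : ℝ // 0 ≤ x} | s.1 ≤ t.1} :=
    (IsClosedEmbedding.subtypeVal isClosed_Ici).isCompact_preimage (isCompact_Icc (b := t.1))
      |>.of_isClosed_subset (isClosed_le continuous_subtype_val continuous_const)
        fun s hs => ⟨s.2, hs⟩
  have hKS : K ∩ e '' {s | s.1 ≤ t.1} ⊆ e '' {s | s.1 < t.1} := by
    rintro _ ⟨hsK, s, hst, rfl⟩
    refine ⟨s, show s.1 < t.1 from (hst : s.1 ≤ t.1).lt_of_ne fun h => ht ?_, rfl⟩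
    rwa [← Subtype.ext h]
  have hclopen := isClopen_preimage_image_of_inter_subset he.isInducing hdense
    (U := {s | s.1 < t.1}) (S := {s | s.1 ≤ t.1})
    (isOpen_lt continuous_subtype_val continuous_const) (fun s (hs : s.1 < t.1) => hs.le)
    (hS.image he.continuous).isClosed hKS
  have h0t : e ⟨0, le_refl 0⟩ ∈ K ∩ e '' {s | s.1 < t.1} :=
    ⟨h0, hKS ⟨h0, ⟨0, le_refl 0⟩, t.2, rfl⟩⟩
  have hzt : z ∈ K \ e '' {s | s.1 < t.1} := ⟨hzK, fun h => hz (image_subset_range _ _ h)⟩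
  exact ⟨⟨_, h0t⟩, fun h => hzt.2 (h ▸ hzK).2, hclopen,
    not_isPreconnected_of_isClopen_preimage hclopen h0t hzt⟩

/-- In a compactification `αX` of `X = [0,∞)`: if `K` is closed, contains the
image of `0` and some point `z` of the remainder, and `e t ∉ K` for some
`t ∈ X`, then `K ∩ e([0,t))` is a nonempty proper subset of `K` which is clopen
in `K`; hence `K` is disconnected. -/
theorem stmt14 {A : Type*} [TopologicalSpace A] [CompactSpace A] [T2Space A]
    (e : {x : ℝ // 0 ≤ x} → A)
    (he : Topology.IsEmbedding e) (hdense : DenseRange e)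
    (K : Set A) (hK : IsClosed K)
    (h0 : e ⟨0, le_refl 0⟩ ∈ K)
    (z : A) (hzK : z ∈ K) (hz : z ∉ Set.range e)
    (t : {x : ℝ // 0 ≤ x}) (ht : e t ∉ K) :
    (K ∩ e '' {s | s.1 < t.1}).Nonempty ∧
    K ∩ e '' {s | s.1 < t.1} ≠ K ∧
    IsClopen (Subtype.val ⁻¹' (e '' {s | s.1 < t.1}) : Set K) ∧
    ¬ IsPreconnected K :=
  stmt14_general e he hdense K h0 z hzK hz t ht
end

section
/- Let θ(t) = (2n−1)·ψ(t) for t ∈ [b_{2n−2}, b_{2n}) as in Theorem 3.6, i.e. θ is 0 on [b_{2n−2}, a_{2n−1}), equals (2n−1)(t − a_{2n−1})/(b_{2n−1} − a_{2n−1}) on [a_{2n−1}, b_{2n−1}), equals 2n−1 on [b_{2n−1}, a_{2n}), and equals (2n−1)(b_{2n} − t)/(b_{2n} − a_{2n}) on [a_{2n}, b_{2n}). Then for every n ≥ 3, if t ∈ [a_{2n−1}, a_{2n+1}) and |u − t| ≤ t^(1/k), one has |θ(t) − θ(u)| < ℓ(2n−1), where ℓ(t) = t/2^t. -/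
/-!
Write `p = 1/k` and `c = 2n - 1`, and let `r_m` be the ramp rising affinely from `0` at `a_m` to `1`
at `b_m`. On `[b_{2n-2}, b_{2n+1})` the map `θ` is pieced together from `c · r_{2n-1}`,
`c · (1 - r_{2n})` and `(c + 2) · r_{2n+1}`. The gaps `a_m - b_{m-1} > a_m^p` force the window
`|u - t| ≤ t^p` around `t ∈ [a_{2n-1}, a_{2n+1})` to stay inside one of these pieces, and since
`x ↦ x - x^p` is increasing on `[1, ∞)`, clamping `t` and `u` to `[a_m, b_m]` leaves them at most
`b_m^p` apart. As `b_m - a_m > 2^m b_m^p`, the ramp `r_m` moves by less than `1/2^m` there.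
-/

theorem rpow_sub_rpow_le_sub_of_one_le {p x y : ℝ} (hp0 : 0 ≤ p) (hp1 : p ≤ 1)
    (hx : 1 ≤ x) (hxy : x ≤ y) : y ^ p - x ^ p ≤ y - x := by
  have hx0 : 0 < x := by linarith
  have hs : (-1 : ℝ) ≤ (y - x) / x := by
    rw [le_div_iff₀ hx0]; linarith
  have hbern := rpow_one_add_le_one_add_mul_self hs hp0 hp1
  rw [show 1 + (y - x) / x = y / x by field_simp; ring, Real.div_rpow (by linarith) hx0.le,
    div_le_iff₀ (by positivity)] at hbern
  have hxp : x ^ p ≤ x := Real.rpow_le_self_of_one_le hx hp1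
  have hyx : 0 ≤ (y - x) / x := div_nonneg (by linarith) hx0.le
  calc y ^ p - x ^ p ≤ p * ((y - x) / x) * x ^ p := by linarith
    _ ≤ 1 * ((y - x) / x) * x := by gcongr
    _ = y - x := by field_simp

theorem one_lt_of_rpow_lt_self {p x : ℝ} (hp1 : p ≤ 1) (hx : 0 < x) (h : x ^ p < x) : 1 < x := by
  by_contra! hx1
  have := Real.rpow_le_rpow_of_exponent_ge hx hx1 hp1
  rw [Real.rpow_one] at this
  linarith

theorem one_div_natCast_le_one (k : ℕ) : (1 : ℝ) / k ≤ 1 := by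
  rcases k.eq_zero_or_pos with rfl | hk
  · simp
  · exact div_le_one_of_le₀ (by exact_mod_cast hk) k.cast_nonneg

theorem sub_rpow_le_of_abs_sub_le_rpow {p a t u : ℝ} (hp0 : 0 ≤ p) (hp1 : p ≤ 1) (ha : 1 ≤ a)
    (hat : a ≤ t) (htu : |u - t| ≤ t ^ p) : a - a ^ p ≤ u := by
  have := rpow_sub_rpow_le_sub_of_one_le hp0 hp1 ha hat
  linarith [(abs_le.mp htu).1]

theorem le_add_rpow_of_abs_sub_le_rpow {p s t u : ℝ} (hp0 : 0 ≤ p) (ht : 0 ≤ t) (hts : t ≤ s)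
    (htu : |u - t| ≤ t ^ p) : u ≤ s + s ^ p := by
  have := Real.rpow_le_rpow ht hts hp0
  linarith [(abs_le.mp htu).2]

noncomputable def ramp (a b x : ℝ) : ℝ := (max a (min x b) - a) / (b - a)

theorem ramp_of_le {a b x : ℝ} (hx : x ≤ a) : ramp a b x = 0 := by
  simp [ramp, min_le_of_left_le hx]

theorem ramp_of_mem {a b x : ℝ} (hax : a ≤ x) (hxb : x ≤ b) :
    ramp a b x = (x - a) / (b - a) := by
  simp [ramp, hax, hxb]

theorem ramp_of_ge {a b x : ℝ} (hab : a < b) (hbx : b ≤ x) : ramp a b x = 1 := by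
  simp [ramp, hbx, hab.le, div_self (sub_ne_zero.mpr hab.ne')]

theorem eq_add_mul_ramp {f : ℝ → ℝ} {s a b q v w x : ℝ} (hab : a < b)
    (hleft : ∀ y, s ≤ y → y < a → f y = v)
    (hmid : ∀ y, a ≤ y → y < b → f y = v + (w - v) * ((y - a) / (b - a)))
    (hright : ∀ y, b ≤ y → y < q → f y = w) (hsx : s ≤ x) (hxq : x < q) :
    f x = v + (w - v) * ramp a b x := by
  rcases lt_or_ge x a with hxa | hax
  · rw [hleft x hsx hxa, ramp_of_le hxa.le]; ring
  rcases lt_or_ge x b with hxb | hbx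
  · rw [hmid x hax hxb, ramp_of_mem hax hxb.le]
  · rw [hright x hbx hxq, ramp_of_ge hab hbx]; ring

theorem abs_ramp_sub_ramp_le {p a b t u : ℝ} (hp0 : 0 ≤ p) (hp1 : p ≤ 1) (hab : a < b)
    (hb : 1 ≤ b) (ht : 0 ≤ t) (htu : |u - t| ≤ t ^ p) :
    |ramp a b t - ramp a b u| ≤ b ^ p / (b - a) := by
  rw [ramp, ramp, ← sub_div, abs_div, abs_of_pos (sub_pos.mpr hab)]
  gcongr
  rcases le_or_gt t b with htb | hbt
  · have := Real.rpow_le_rpow ht htb hp0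
    have := abs_le.mp htu
    rw [abs_le]
    constructor <;>
    · simp only [max_def, min_def]; split_ifs <;> linarith
  · have := sub_rpow_le_of_abs_sub_le_rpow hp0 hp1 hb hbt.le htu
    have := Real.rpow_nonneg (zero_le_one.trans hb) p
    rw [min_eq_right hbt.le, max_eq_right hab.le, abs_le]
    constructor <;>
    · simp only [max_def, min_def]; split_ifs <;> linarith

/-- Separation conditions on `0 = b₀ < a₁ < b₁ < a₂ < ⋯` from Proposition 3.2, where `p = 1/k`. -/
structure RampSeq (p : ℝ) (a b : ℕ → ℝ) : Prop where
  b_zero : b 0 = 0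
  interlace : ∀ n, 1 ≤ n → b (n - 1) < a n ∧ a n < b n
  gap : ∀ n, 1 ≤ n → a n - b (n - 1) > 2 ^ (n - 1) * a n ^ p
  long : ∀ n, 1 ≤ n → b n - a n > 2 ^ n * b n ^ p

namespace RampSeq

variable {p : ℝ} {a b : ℕ → ℝ} {m : ℕ} {t u : ℝ}

theorem lt_a (h : RampSeq p a b) (m : ℕ) : b m < a (m + 1) := by
  simpa using (h.interlace (m + 1) m.succ_pos).1

theorem a_lt_b (h : RampSeq p a b) (m : ℕ) : a (m + 1) < b (m + 1) :=
  (h.interlace (m + 1) m.succ_pos).2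

theorem b_nonneg (h : RampSeq p a b) : ∀ m, 0 ≤ b m
  | 0 => h.b_zero.ge
  | m + 1 => ((h.b_nonneg m).trans (h.lt_a m).le).trans (h.a_lt_b m).le

theorem a_pos (h : RampSeq p a b) (m : ℕ) : 0 < a (m + 1) :=
  (h.b_nonneg m).trans_lt (h.lt_a m)

theorem rpow_lt_sub (h : RampSeq p a b) (m : ℕ) : a (m + 1) ^ p < a (m + 1) - b m := by
  have hgap : 2 ^ m * a (m + 1) ^ p < a (m + 1) - b m := by simpa using h.gap (m + 1) m.succ_pos
  exact (le_mul_of_one_le_left (Real.rpow_nonneg (h.a_pos m).le p)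
    (one_le_pow₀ one_le_two)).trans_lt hgap

theorem one_lt_a (h : RampSeq p a b) (hp1 : p ≤ 1) (m : ℕ) : 1 < a (m + 1) :=
  one_lt_of_rpow_lt_self hp1 (h.a_pos m) (by linarith [h.rpow_lt_sub m, h.b_nonneg m])

theorem one_lt_b (h : RampSeq p a b) (hp1 : p ≤ 1) (m : ℕ) : 1 < b (m + 1) :=
  (h.one_lt_a hp1 m).trans (h.a_lt_b m)

theorem b_lt_of_a_le (h : RampSeq p a b) (hp0 : 0 ≤ p) (hp1 : p ≤ 1) (hat : a (m + 1) ≤ t)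
    (htu : |u - t| ≤ t ^ p) : b m < u := by
  linarith [h.rpow_lt_sub m, sub_rpow_le_of_abs_sub_le_rpow hp0 hp1 (h.one_lt_a hp1 m).le hat htu]

theorem lt_a_of_le_b (h : RampSeq p a b) (hp0 : 0 ≤ p) (ht : 0 ≤ t) (htb : t ≤ b m)
    (htu : |u - t| ≤ t ^ p) : u < a (m + 1) := by
  have := Real.rpow_le_rpow (h.b_nonneg m) (h.lt_a m).le hp0
  linarith [h.rpow_lt_sub m, le_add_rpow_of_abs_sub_le_rpow hp0 ht htb htu]

theorem lt_b_of_le_a (h : RampSeq p a b) (hp0 : 0 ≤ p) (ht : 0 ≤ t) (hta : t ≤ a (m + 1))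
    (htu : |u - t| ≤ t ^ p) : u < b (m + 1) := by
  have hab := Real.rpow_le_rpow (h.a_pos m).le (h.a_lt_b m).le hp0
  have hb := le_mul_of_one_le_left (Real.rpow_nonneg (h.b_nonneg (m + 1)) p)
    (one_le_pow₀ (M₀ := ℝ) one_le_two (n := m + 1))
  linarith [h.long (m + 1) m.succ_pos, le_add_rpow_of_abs_sub_le_rpow hp0 ht hta htu]

theorem abs_ramp_sub_ramp_lt (h : RampSeq p a b) (hp0 : 0 ≤ p) (hp1 : p ≤ 1) (m : ℕ)
    (ht : 0 ≤ t) (htu : |u - t| ≤ t ^ p) :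
    |ramp (a (m + 1)) (b (m + 1)) t - ramp (a (m + 1)) (b (m + 1)) u| < 1 / 2 ^ (m + 1) := by
  have hlong := h.long (m + 1) m.succ_pos
  refine (abs_ramp_sub_ramp_le hp0 hp1 (h.a_lt_b m) (h.one_lt_b hp1 m).le ht htu).trans_lt ?_
  rw [div_lt_div_iff₀ (sub_pos.mpr (h.a_lt_b m)) (by positivity)]
  linarith

theorem abs_sub_lt_of_trapezoid (h : RampSeq p a b) (hp0 : 0 ≤ p) (hp1 : p ≤ 1) {θ : ℝ → ℝ}
    {c : ℝ} (hc : 1 ≤ c) (i : ℕ)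
    (hup : ∀ x, b i ≤ x → x < a (i + 2) → θ x = c * ramp (a (i + 1)) (b (i + 1)) x)
    (hdown : ∀ x, b (i + 1) ≤ x → x < a (i + 3) → θ x = c - c * ramp (a (i + 2)) (b (i + 2)) x)
    (hnext : ∀ x, b (i + 2) ≤ x → x < b (i + 3) → θ x = (c + 2) * ramp (a (i + 3)) (b (i + 3)) x)
    (ht1 : a (i + 1) ≤ t) (ht2 : t < a (i + 3)) (htu : |u - t| ≤ t ^ p) :
    |θ t - θ u| < c / 2 ^ (i + 1) := by
  have hc0 : 0 < c := zero_lt_one.trans_le hc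
  have ht0 : 0 ≤ t := (h.a_pos i).le.trans ht1
  have hu0 : b i < u := h.b_lt_of_a_le hp0 hp1 ht1 htu
  have hr := fun m => h.abs_ramp_sub_ramp_lt hp0 hp1 m ht0 htu
  have hbt0 : b i ≤ t := (h.lt_a i).le.trans ht1
  rcases lt_or_ge t (b (i + 1)) with htb | hbt
  · rw [hup t hbt0 (htb.trans (h.lt_a _)), hup u hu0.le (h.lt_a_of_le_b hp0 ht0 htb.le htu),
      ← mul_sub, abs_mul, abs_of_pos hc0, div_eq_mul_one_div]
    exact mul_lt_mul_of_pos_left (hr i) hc0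
  rcases lt_or_ge u (b (i + 1)) with hub | hbu
  · have hta : t < a (i + 2) := by
      by_contra! hat
      exact (h.b_lt_of_a_le hp0 hp1 hat htu).not_gt hub
    rw [hup t hbt0 hta, hup u hu0.le (hub.trans (h.lt_a _)), ← mul_sub, abs_mul,
      abs_of_pos hc0, div_eq_mul_one_div]
    exact mul_lt_mul_of_pos_left (hr i) hc0
  rcases lt_or_ge u (a (i + 3)) with hua | hau
  · rw [hdown t hbt ht2, hdown u hbu hua, sub_sub_sub_cancel_left, ← mul_sub, abs_mul,
      abs_sub_comm, abs_of_pos hc0, div_eq_mul_one_div]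
    calc c * _ < c * (1 / 2 ^ (i + 2)) := mul_lt_mul_of_pos_left (hr (i + 1)) hc0
      _ ≤ c * (1 / 2 ^ (i + 1)) := by gcongr <;> norm_num
  · have hbt2 : b (i + 2) ≤ t := by
      by_contra! htb
      exact (h.lt_a_of_le_b hp0 ht0 htb.le htu).not_ge hau
    rw [hnext t hbt2 (ht2.trans (h.a_lt_b _)),
      hnext u ((h.lt_a _).le.trans hau) (h.lt_b_of_le_a hp0 ht0 ht2.le htu), ← mul_sub, abs_mul,
      abs_of_pos (by positivity)]
    calc (c + 2) * _ < (c + 2) * (1 / 2 ^ (i + 3)) :=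
          mul_lt_mul_of_pos_left (hr (i + 2)) (by positivity)
      _ ≤ c / 2 ^ (i + 1) := by
        rw [pow_add 2 (i + 1) 2, mul_one_div, div_le_div_iff₀ (by positivity) (by positivity)]
        nlinarith [pow_pos (two_pos (α := ℝ)) (i + 1)]

theorem abs_sub_lt_of_pieces (h : RampSeq p a b) (hp0 : 0 ≤ p) (hp1 : p ≤ 1) {θ : ℝ → ℝ}
    {c : ℝ} (hc : 1 ≤ c) (i : ℕ)
    (hzero : ∀ x, b i ≤ x → x < a (i + 1) → θ x = 0)
    (hup : ∀ x, a (i + 1) ≤ x → x < b (i + 1) →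
      θ x = c * (x - a (i + 1)) / (b (i + 1) - a (i + 1)))
    (htop : ∀ x, b (i + 1) ≤ x → x < a (i + 2) → θ x = c)
    (hdown : ∀ x, a (i + 2) ≤ x → x < b (i + 2) →
      θ x = c * (b (i + 2) - x) / (b (i + 2) - a (i + 2)))
    (hzero' : ∀ x, b (i + 2) ≤ x → x < a (i + 3) → θ x = 0)
    (hup' : ∀ x, a (i + 3) ≤ x → x < b (i + 3) →
      θ x = (c + 2) * (x - a (i + 3)) / (b (i + 3) - a (i + 3)))
    (ht1 : a (i + 1) ≤ t) (ht2 : t < a (i + 3)) (htu : |u - t| ≤ t ^ p) :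
    |θ t - θ u| < c / 2 ^ (i + 1) := by
  refine h.abs_sub_lt_of_trapezoid hp0 hp1 hc i
    (fun x hx1 hx2 => (eq_add_mul_ramp (h.a_lt_b i) hzero
      (fun y h1 h2 => by rw [hup y h1 h2]; ring) htop hx1 hx2).trans (by ring))
    (fun x hx1 hx2 => (eq_add_mul_ramp (h.a_lt_b (i + 1)) htop
      (fun y h1 h2 => by
        rw [hdown y h1 h2]
        field_simp [sub_ne_zero.mpr (h.a_lt_b (i + 1)).ne']
        ring) hzero' hx1 hx2).trans (by ring))
    (fun x hx1 hx2 => (eq_add_mul_ramp (w := c + 2) (h.a_lt_b (i + 2)) hzero'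
      (fun y h1 h2 => by rw [hup' y h1 h2]; ring)
      (fun y h1 h2 => absurd h2 h1.not_gt) hx1 hx2).trans (by ring)) ht1 ht2 htu

end RampSeq

theorem stmt16_general (k : ℕ) (a b : ℕ → ℝ)
    (hb0 : b 0 = 0)
    (hord : ∀ n, 1 ≤ n → b (n - 1) < a n ∧ a n < b n)
    (h6 : ∀ n, 1 ≤ n → a n - b (n - 1) > 2 ^ (n - 1) * (a n) ^ ((1:ℝ)/k))
    (h7 : ∀ n, 1 ≤ n → b n - a n > 2 ^ n * (b n) ^ ((1:ℝ)/k))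
    (θ : ℝ → ℝ)
    (hθ0 : ∀ n, 1 ≤ n → ∀ t, b (2*n - 2) ≤ t → t < a (2*n - 1) → θ t = 0)
    (hθup : ∀ n, 1 ≤ n → ∀ t, a (2*n - 1) ≤ t → t < b (2*n - 1) →
      θ t = (2*(n:ℝ) - 1) * (t - a (2*n - 1)) / (b (2*n - 1) - a (2*n - 1)))
    (hθtop : ∀ n, 1 ≤ n → ∀ t, b (2*n - 1) ≤ t → t < a (2*n) →
      θ t = 2*(n:ℝ) - 1)
    (hθdown : ∀ n, 1 ≤ n → ∀ t, a (2*n) ≤ t → t < b (2*n) →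
      θ t = (2*(n:ℝ) - 1) * (b (2*n) - t) / (b (2*n) - a (2*n))) :
    ∀ n, 3 ≤ n → ∀ t u : ℝ, 0 ≤ u →
      a (2*n - 1) ≤ t → t < a (2*n + 1) → |u - t| ≤ t ^ ((1:ℝ)/k) →
      |θ t - θ u| < (2*(n:ℝ) - 1) / 2 ^ (2*n - 1) := by
  intro n hn t u _ ht1 ht2 htu
  obtain ⟨i, hi⟩ : ∃ i, 2 * n = i + 2 := ⟨2 * n - 2, by omega⟩
  have e₀ : 2 * n - 2 = i := by omega
  have e₁ : 2 * n - 1 = i + 1 := by omega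
  have e₂ : 2 * (n + 1) - 2 = i + 2 := by omega
  have e₃ : 2 * (n + 1) - 1 = i + 3 := by omega
  rw [e₁] at ht1 ⊢
  rw [show 2 * n + 1 = i + 3 by omega] at ht2
  have hc : (1 : ℝ) ≤ 2 * n - 1 := by
    have : (1 : ℝ) ≤ n := by exact_mod_cast (by omega : 1 ≤ n)
    linarith
  refine RampSeq.abs_sub_lt_of_pieces ⟨hb0, hord, h6, h7⟩ (by positivity)
    (one_div_natCast_le_one k) hc i ?_ ?_ ?_ ?_ ?_ ?_ ht1 ht2 htu
  · simpa only [e₀, e₁] using hθ0 n (by omega)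
  · simpa only [e₁] using hθup n (by omega)
  · simpa only [hi, show i + 2 - 1 = i + 1 by omega] using hθtop n (by omega)
  · simpa only [hi] using hθdown n (by omega)
  · simpa only [e₂, e₃] using hθ0 (n + 1) (by omega)
  · intro x hx1 hx2
    rw [hθup (n + 1) (by omega) x (by rwa [e₃]) (by rwa [e₃]), e₃]
    push_cast
    ring

/-- Claim 3.6.1: for the piecewise map `θ` of Theorem 3.6 (equal to
`(2n−1)·ψ` on `[b_{2n−2}, b_{2n})`), if `n ≥ 3`, `t ∈ [a_{2n−1}, a_{2n+1})`
and `|u − t| ≤ t ^ (1/k)`, then `|θ(t) − θ(u)| < ℓ(2n−1)` where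
`ℓ(x) = x / 2 ^ x`. -/
theorem stmt16 (k : ℕ) (hk : 3 ≤ k) (a b : ℕ → ℝ)
    (hb0 : b 0 = 0)
    (hord : ∀ n, 1 ≤ n → b (n - 1) < a n ∧ a n < b n)
    (h1 : ∀ n, 1 ≤ n → (a n) ^ ((1:ℝ)/k) > 2 ^ n)
    (h2 : ∀ n, 1 ≤ n → b (n - 1) + (b (n - 1)) ^ ((1:ℝ)/k) < a n)
    (h4 : ∀ n, 1 ≤ n → b n = a n + (a n) ^ ((2:ℝ)/k))
    (h6 : ∀ n, 1 ≤ n → a n - b (n - 1) > 2 ^ (n - 1) * (a n) ^ ((1:ℝ)/k))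
    (h7 : ∀ n, 1 ≤ n → b n - a n > 2 ^ n * (b n) ^ ((1:ℝ)/k))
    (θ : ℝ → ℝ)
    (hθ0 : ∀ n, 1 ≤ n → ∀ t, b (2*n - 2) ≤ t → t < a (2*n - 1) → θ t = 0)
    (hθup : ∀ n, 1 ≤ n → ∀ t, a (2*n - 1) ≤ t → t < b (2*n - 1) →
      θ t = (2*(n:ℝ) - 1) * (t - a (2*n - 1)) / (b (2*n - 1) - a (2*n - 1)))
    (hθtop : ∀ n, 1 ≤ n → ∀ t, b (2*n - 1) ≤ t → t < a (2*n) →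
      θ t = 2*(n:ℝ) - 1)
    (hθdown : ∀ n, 1 ≤ n → ∀ t, a (2*n) ≤ t → t < b (2*n) →
      θ t = (2*(n:ℝ) - 1) * (b (2*n) - t) / (b (2*n) - a (2*n))) :
    ∀ n, 3 ≤ n → ∀ t u : ℝ, 0 ≤ u →
      a (2*n - 1) ≤ t → t < a (2*n + 1) → |u - t| ≤ t ^ ((1:ℝ)/k) →
      |θ t - θ u| < (2*(n:ℝ) - 1) / 2 ^ (2*n - 1) :=
  stmt16_general k a b hb0 hord h6 h7 θ hθ0 hθup hθtop hθdown
end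

section
/- Let X = [0,∞) with base point 0, and let D = {π/2 + 2nπ : n ∈ ℕ} and consider the planar curve f(t) = (t, t·sin t) in ℝ² with the Euclidean metric. Then the system consisting of f(D) and Z = {f(t) : t·sin t ≤ 0} diverges as a power function: there exist α > 0 and r₀ > 0 such that max{dist(p, f(D)), dist(p, Z)} ≥ |p|^α whenever p lies on the curve and |p| > r₀, where |p| is the Euclidean distance from the origin. -/
open Real

lemma stmt17_le_infDist {s : Set (EuclideanSpace ℝ (Fin 2))} {x : EuclideanSpace ℝ (Fin 2)}
    {b : ℝ} (hs : s.Nonempty) (h : ∀ y ∈ s, b ≤ dist x y) : b ≤ Metric.infDist x s := by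
  by_contra hb
  push_neg at hb
  obtain ⟨y, hy, hlt⟩ := (Metric.infDist_lt_iff hs).mp hb
  exact (h y hy).not_gt hlt

lemma stmt17_auxD (t s x : ℝ) (ht : 0 ≤ t) (hx : x ≤ 1/2) :
    (t/3)^2 ≤ (t-s)^2 + (t*x - s*1)^2 := by
  have h1 : t/2 ≤ t*(1 - x) := by nlinarith
  nlinarith [sq_nonneg ((t - s) + (t*x - s)), mul_le_mul h1 h1 (by linarith) (by nlinarith),
    sq_nonneg t]

lemma stmt17_auxZ (t s y z : ℝ) (ht : 0 ≤ t) (hy : t/2 ≤ y) (hz : z ≤ 0) :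
    (t/3)^2 ≤ (t-s)^2 + (y - z)^2 := by
  nlinarith [sq_nonneg (t - s), sq_nonneg t]

/-- Example 3.4: on the curve `f(t) = (t, t·sin t)` in the Euclidean plane, the
system consisting of `D = f({π/2 + 2nπ})` and `Z = {f(t) : t·sin t ≤ 0}`
diverges as a power function. -/
theorem stmt17 (f : ℝ → EuclideanSpace ℝ (Fin 2))
    (hf : ∀ t, f t = (WithLp.equiv 2 (Fin 2 → ℝ)).symm ![t, t * Real.sin t])
    (D Z : Set (EuclideanSpace ℝ (Fin 2)))
    (hD : D = f '' {t | ∃ n : ℕ, t = π/2 + 2*n*π})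
    (hZ : Z = f '' {t | 0 ≤ t ∧ t * Real.sin t ≤ 0}) :
    ∃ α > (0:ℝ), ∃ r₀ > (0:ℝ), ∀ t : ℝ, 0 ≤ t → ‖f t‖ > r₀ →
      max (Metric.infDist (f t) D) (Metric.infDist (f t) Z) ≥ ‖f t‖ ^ α := by
  subst hD hZ
  have dist_f : ∀ s t : ℝ, dist (f t) (f s) =
      Real.sqrt ((t - s)^2 + (t*Real.sin t - s*Real.sin s)^2) := by
    intro s t
    rw [hf, hf, EuclideanSpace.dist_eq]
    simp [Fin.sum_univ_two, Real.dist_eq, sq_abs]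
  have norm_f : ∀ t : ℝ, ‖f t‖ = Real.sqrt (t^2 + (t*Real.sin t)^2) := by
    intro t
    rw [hf, EuclideanSpace.norm_eq]
    simp [Fin.sum_univ_two, sq_abs]
  have hDne : (f '' {t | ∃ n : ℕ, t = π/2 + 2*n*π}).Nonempty :=
    ⟨f (π/2), ⟨π/2, ⟨0, by push_cast; ring⟩, rfl⟩⟩
  have hZne : (f '' {t | 0 ≤ t ∧ t * Real.sin t ≤ 0}).Nonempty :=
    ⟨f 0, ⟨0, ⟨le_refl 0, by simp⟩, rfl⟩⟩
  -- Key uniform bound: max of the two distances is at least t/3.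
  have key : ∀ t : ℝ, 0 ≤ t →
      t/3 ≤ max (Metric.infDist (f t) (f '' {t | ∃ n : ℕ, t = π/2 + 2*n*π})) (Metric.infDist (f t) (f '' {t | 0 ≤ t ∧ t * Real.sin t ≤ 0})) := by
    intro t ht
    rcases le_or_gt (Real.sin t) (1/2) with hs | hs
    · -- distance to D is large
      refine le_max_of_le_left (stmt17_le_infDist hDne ?_)
      rintro y ⟨s, ⟨n, rfl⟩, rfl⟩
      rw [dist_f]
      have hsin : Real.sin (π/2 + 2*n*π) = 1 := by
        rw [show (π/2 + 2*(n:ℝ)*π : ℝ) = π/2 + n*(2*π) by ring,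
          Real.sin_add_nat_mul_two_pi, Real.sin_pi_div_two]
      rw [hsin]
      rw [show t/3 = Real.sqrt ((t/3)^2) from (Real.sqrt_sq (by linarith)).symm]
      apply Real.sqrt_le_sqrt
      exact stmt17_auxD t _ (Real.sin t) ht hs
    · -- distance to Z is large
      refine le_max_of_le_right (stmt17_le_infDist hZne ?_)
      rintro y ⟨s, ⟨hs0, hsz⟩, rfl⟩
      rw [dist_f]
      rw [show t/3 = Real.sqrt ((t/3)^2) from (Real.sqrt_sq (by linarith)).symm]
      apply Real.sqrt_le_sqrt
      have hy : t/2 ≤ t * Real.sin t := by nlinarith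
      exact stmt17_auxZ t s _ _ ht hy hsz
  refine ⟨1/2, by norm_num, 100, by norm_num, fun t ht hnorm => ?_⟩
  -- bounds on the norm
  have hub : ‖f t‖ ≤ 2*t := by
    rw [norm_f]
    rw [show 2*t = Real.sqrt ((2*t)^2) from (Real.sqrt_sq (by linarith)).symm]
    apply Real.sqrt_le_sqrt
    nlinarith [Real.sin_sq_le_one t, sq_nonneg t]
  have ht50 : 50 < t := by linarith
  have hnn : (0:ℝ) ≤ ‖f t‖ := norm_nonneg _
  calc ‖f t‖ ^ ((1:ℝ)/2) ≤ (2*t) ^ ((1:ℝ)/2) := by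
        apply Real.rpow_le_rpow hnn hub (by norm_num)
    _ = Real.sqrt (2*t) := (Real.sqrt_eq_rpow _).symm
    _ ≤ t/3 := by
        rw [show t/3 = Real.sqrt ((t/3)^2) from (Real.sqrt_sq (by linarith)).symm]
        apply Real.sqrt_le_sqrt
        nlinarith
    _ ≤ max (Metric.infDist (f t) (f '' {t | ∃ n : ℕ, t = π/2 + 2*n*π})) (Metric.infDist (f t) (f '' {t | 0 ≤ t ∧ t * Real.sin t ≤ 0})) := key t ht
end

section
/- Suppose (xᵢ) is a sequence in a proper metric space X with |xᵢ| < |x_{i+1}| and |xᵢ| → ∞, and suppose d(xᵢ, E) < |xᵢ|^(1/i) for every i, where E ⊆ X. Define s : ℝ₊ → ℝ₊ by s(t) = |xᵢ|^(1/i) for t ∈ [|xᵢ|, |x_{i+1}|) and s(t) = 1 for t ∈ [0, |x₁|). Then s is asymptotically subpower: for every α > 0 there exists t₀ such that s(t) < t^α for t > t₀. -/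
/-- The step function `s` built from a sequence `(xᵢ)` with `|xᵢ| < |x_{i+1}|`,
`|xᵢ| → ∞`, `|x₁| > 1` and `d(xᵢ, E) < |xᵢ|^(1/i)`, defined by
`s(t) = |xᵢ|^(1/i)` on `[|xᵢ|, |x_{i+1}|)` and `s(t) = 1` on `[0, |x₁|)`, is
asymptotically subpower. -/
theorem stmt18 {X : Type*} [MetricSpace X] [ProperSpace X]
    (x₀ : X) (x : ℕ → X) (E : Set X)
    (hmono : ∀ i, 1 ≤ i → dist x₀ (x i) < dist x₀ (x (i + 1)))
    (htend : Filter.Tendsto (fun i => dist x₀ (x i)) Filter.atTop Filter.atTop)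
    (hx1 : 1 < dist x₀ (x 1))
    (hE : ∀ i, 1 ≤ i → Metric.infDist (x i) E < (dist x₀ (x i)) ^ ((1:ℝ)/i))
    (s : ℝ → ℝ)
    (hs : ∀ i, 1 ≤ i → ∀ t, dist x₀ (x i) ≤ t → t < dist x₀ (x (i + 1)) →
      s t = (dist x₀ (x i)) ^ ((1:ℝ)/i))
    (hs0 : ∀ t, 0 ≤ t → t < dist x₀ (x 1) → s t = 1) :
    ∀ α > (0:ℝ), ∃ t₀ > (0:ℝ), ∀ t > t₀, s t < t ^ α := by
  intro α hα
  set f : ℕ → ℝ := fun i => dist x₀ (x i) with hf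
  obtain ⟨N, hN1, hNα⟩ : ∃ N : ℕ, 1 ≤ N ∧ (1:ℝ)/N < α := by
    obtain ⟨N, hN⟩ := exists_nat_gt (1/α)
    refine ⟨N + 1, le_add_self, ?_⟩
    have hNpos : (0:ℝ) < (N:ℝ) + 1 := by positivity
    rw [Nat.cast_add, Nat.cast_one, div_lt_iff₀ hNpos]
    have h1 : (1:ℝ)/α < N := hN
    have h2 : (1:ℝ)/α * α = 1 := by field_simp
    nlinarith
  refine ⟨max (f N) 1, lt_of_lt_of_le one_pos (le_max_right _ _), ?_⟩
  intro t ht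
  have ht1 : (1:ℝ) < t := lt_of_le_of_lt (le_max_right _ _) ht
  have htN : f N ≤ t := le_of_lt (lt_of_le_of_lt (le_max_left _ _) ht)
  -- find M ≥ N with t < f M
  obtain ⟨M₀, hM₀⟩ := Filter.eventually_atTop.mp (htend.eventually (Filter.eventually_gt_atTop t))
  set M := max M₀ N with hM
  have hMN : N ≤ M := le_max_right _ _
  have htM : t < f M := hM₀ M (le_max_left _ _)
  -- find i with N ≤ i, f i ≤ t < f (i+1)
  have key : ∀ m, N ≤ m → t < f m → ∃ i, N ≤ i ∧ f i ≤ t ∧ t < f (i+1) := by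
    intro m hm
    induction m, hm using Nat.le_induction with
    | base => intro h; exact absurd htN (not_le.mpr h)
    | succ m hm ih =>
      intro h
      rcases le_or_gt (f m) t with h' | h'
      · exact ⟨m, hm, h', h⟩
      · exact ih h'
  obtain ⟨i, hNi, hit, hti⟩ := key M hMN htM
  have hi1 : 1 ≤ i := le_trans hN1 hNi
  have hst : s t = f i ^ ((1:ℝ)/i) := hs i hi1 t hit hti
  rw [hst]
  have hfi0 : 0 ≤ f i := dist_nonneg
  have h1 : f i ^ ((1:ℝ)/i) ≤ t ^ ((1:ℝ)/i) :=
    Real.rpow_le_rpow hfi0 hit (by positivity)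
  have h2 : t ^ ((1:ℝ)/i) < t ^ α := by
    apply Real.rpow_lt_rpow_of_exponent_lt ht1
    have hNpos : (0:ℝ) < (N:ℝ) := by exact_mod_cast hN1
    have : (1:ℝ)/i ≤ 1/N := by
      apply one_div_le_one_div_of_le hNpos
      exact_mod_cast hNi
    linarith
  exact lt_of_le_of_lt h1 h2
end
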